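/- arXiv:2306.02486 — 8 statements merged into one kernel-verified Lean document; each statement's English description precedes it below -/
import Mathlib

section
/- Let S be the convex hull in ℝⁿ of a finite nonempty set of points all of whose coordinates are nonnegative rational numbers. Then there exists δ > 0 such that for every positive integer m, every point s ∈ mS, and every lattice point u ∈ ℕⁿ with u ∉ mS, one has |s − u| ≥ δ; that is, d(mS, ℕⁿ \ mS) ≥ δ for all m ∈ ℕ*. -/
open Pointwise

section Aux

variable {n : ℕ}

noncomputable def rpl_rho (w : Fin n → ℚ) : EuclideanSpace ℝ (Fin n) :=
  (WithLp.equiv 2 (Fin n → ℝ)).symm (fun j => (w j : ℝ))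

lemma rpl_rho_apply (w : Fin n → ℚ) (j : Fin n) : rpl_rho w j = (w j : ℝ) := rfl

def rpl_dotR (a : Fin n → ℚ) (x : EuclideanSpace ℝ (Fin n)) : ℝ :=
  ∑ j, (a j : ℝ) * x j

def rpl_dotQ (a w : Fin n → ℚ) : ℚ := ∑ j, a j * w j

lemma rpl_dotR_rho (a w : Fin n → ℚ) : rpl_dotR a (rpl_rho w) = (rpl_dotQ a w : ℝ) := by
  simp [rpl_dotR, rpl_dotQ, rpl_rho_apply]

lemma rpl_dotR_smul (a : Fin n → ℚ) (c : ℝ) (x : EuclideanSpace ℝ (Fin n)) :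
    rpl_dotR a (c • x) = c * rpl_dotR a x := by
  simp [rpl_dotR, Finset.mul_sum]; congr 1; ext j; ring

lemma rpl_dotR_add (a : Fin n → ℚ) (x y : EuclideanSpace ℝ (Fin n)) :
    rpl_dotR a (x + y) = rpl_dotR a x + rpl_dotR a y := by
  simp [rpl_dotR, ← Finset.sum_add_distrib]; congr 1; ext j; ring

lemma rpl_dotR_sub (a : Fin n → ℚ) (x y : EuclideanSpace ℝ (Fin n)) :
    rpl_dotR a (x - y) = rpl_dotR a x - rpl_dotR a y := by
  simp [rpl_dotR, ← Finset.sum_sub_distrib]; congr 1; ext j; ring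

lemma rpl_dotR_combo (γ δ : ℚ) (a b : Fin n → ℚ) (x : EuclideanSpace ℝ (Fin n)) :
    rpl_dotR (fun j => γ * a j - δ * b j) x = (γ : ℝ) * rpl_dotR a x - (δ : ℝ) * rpl_dotR b x := by
  simp [rpl_dotR, Finset.mul_sum, ← Finset.sum_sub_distrib]; congr 1; ext j; push_cast; ring

lemma rpl_dotR_neg (a : Fin n → ℚ) (x : EuclideanSpace ℝ (Fin n)) :
    rpl_dotR (-a) x = -rpl_dotR a x := by
  simp [rpl_dotR, ← Finset.sum_neg_distrib]

lemma rpl_dotR_single (j : Fin n) (x : EuclideanSpace ℝ (Fin n)) :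
    rpl_dotR (Pi.single j 1) x = x j := by
  unfold rpl_dotR
  rw [Finset.sum_eq_single j]
  · simp
  · intro i _ hij; simp [Pi.single_apply, hij]
  · simp

def rpl_sat (F : Finset ((Fin n → ℚ) × ℚ)) : Set (EuclideanSpace ℝ (Fin n)) :=
  {x | ∀ p ∈ F, rpl_dotR p.1 x ≤ (p.2 : ℝ)}

lemma rpl_base_case (v : Fin n → ℚ) :
    ∃ F : Finset ((Fin n → ℚ) × ℚ), rpl_sat F = {rpl_rho v} := by
  refine ⟨(Finset.univ.image fun j => (Pi.single j (1:ℚ), v j)) ∪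
    (Finset.univ.image fun j => (-Pi.single j (1:ℚ), -(v j))), ?_⟩
  ext x
  simp only [rpl_sat, Set.mem_setOf_eq, Finset.mem_union, Finset.mem_image, Finset.mem_univ,
    true_and, Set.mem_singleton_iff]
  constructor
  · intro h
    ext j
    have h1 := h (Pi.single j 1, v j) (Or.inl ⟨j, rfl⟩)
    have h2 := h (-Pi.single j 1, -(v j)) (Or.inr ⟨j, rfl⟩)
    simp only [rpl_dotR_neg, rpl_dotR_single] at h1 h2
    push_cast at h1 h2
    rw [rpl_rho_apply]
    exact le_antisymm h1 (by linarith)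
  · rintro rfl p hp
    rcases hp with ⟨j, rfl⟩ | ⟨j, rfl⟩
    · simp [rpl_dotR_single, rpl_rho_apply]
    · simp only [rpl_dotR_neg, rpl_dotR_single, rpl_rho_apply]
      push_cast; simp

/-- the affine slack of constraint `p` at vertex `v` -/
def rpl_cQ (v : Fin n → ℚ) (p : (Fin n → ℚ) × ℚ) : ℚ := rpl_dotQ p.1 v - p.2

noncomputable def rpl_FStep (v : Fin n → ℚ) (F : Finset ((Fin n → ℚ) × ℚ)) :
    Finset ((Fin n → ℚ) × ℚ) :=
  (F.filter fun p => rpl_cQ v p ≤ 0)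
  ∪ (F.filter fun p => 0 < rpl_cQ v p).image (fun p => (p.1, rpl_dotQ p.1 v))
  ∪ ((F.filter fun p => 0 < rpl_cQ v p) ×ˢ (F.filter fun p => rpl_cQ v p < 0)).image
      (fun pq => (fun j => rpl_cQ v pq.1 * pq.2.1 j - rpl_cQ v pq.2 * pq.1.1 j,
        rpl_cQ v pq.1 * pq.2.2 - rpl_cQ v pq.2 * pq.1.2))

lemma rpl_step_case (v : Fin n → ℚ) (F : Finset ((Fin n → ℚ) × ℚ))
    (s : Set (EuclideanSpace ℝ (Fin n))) (hsne : s.Nonempty)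
    (hbdd : ∃ R : ℝ, ∀ z ∈ convexHull ℝ s, ‖z‖ ≤ R)
    (hF : rpl_sat F = convexHull ℝ s) :
    rpl_sat (rpl_FStep v F) = convexHull ℝ (insert (rpl_rho v) s) := by
  have hcast : ∀ p, ((rpl_cQ v p : ℚ) : ℝ) = (rpl_dotQ p.1 v : ℝ) - (p.2 : ℝ) := by
    intro p; simp [rpl_cQ]
  have hullne : (convexHull ℝ s).Nonempty := hsne.mono (subset_convexHull ℝ s)
  rw [convexHull_insert hsne]
  ext x
  constructor
  · intro hx
    have h1 : ∀ p ∈ F, rpl_cQ v p ≤ 0 → rpl_dotR p.1 x ≤ (p.2 : ℝ) := by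
      intro p hp hc
      exact hx p (by simp [rpl_FStep, Finset.mem_union, Finset.mem_filter, hp, hc])
    have h2 : ∀ p ∈ F, 0 < rpl_cQ v p → rpl_dotR p.1 x ≤ ((rpl_dotQ p.1 v : ℚ) : ℝ) := by
      intro p hp hc
      have := hx (p.1, rpl_dotQ p.1 v) (by
        simp only [rpl_FStep, Finset.mem_union, Finset.mem_image, Finset.mem_filter]
        exact Or.inl (Or.inr ⟨p, ⟨hp, hc⟩, rfl⟩))
      exact this
    have h3 : ∀ p ∈ F, ∀ q ∈ F, 0 < rpl_cQ v p → rpl_cQ v q < 0 →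
        ((rpl_cQ v p : ℚ) : ℝ) * rpl_dotR q.1 x - ((rpl_cQ v q : ℚ) : ℝ) * rpl_dotR p.1 x ≤
          ((rpl_cQ v p : ℚ) : ℝ) * (q.2 : ℝ) - ((rpl_cQ v q : ℚ) : ℝ) * (p.2 : ℝ) := by
      intro p hp q hq hcp hcq
      have := hx (fun j => rpl_cQ v p * q.1 j - rpl_cQ v q * p.1 j,
          rpl_cQ v p * q.2 - rpl_cQ v q * p.2) (by
        simp only [rpl_FStep, Finset.mem_union, Finset.mem_image, Finset.mem_filter,
          Finset.mem_product]
        exact Or.inr ⟨(p, q), ⟨⟨hp, hcp⟩, hq, hcq⟩, rfl⟩)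
      rw [rpl_dotR_combo] at this
      push_cast at this ⊢
      linarith
    set T := F.filter (fun p => 0 < rpl_cQ v p) with hT
    by_cases hTne : T.Nonempty
    · set f : ((Fin n → ℚ) × ℚ) → ℝ :=
        fun p => (rpl_dotR p.1 x - (p.2 : ℝ)) / ((rpl_cQ v p : ℚ) : ℝ) with hf
      set t : ℝ := max 0 (T.sup' hTne f) with htdef
      have ht0 : 0 ≤ t := le_max_left _ _
      have ht1 : t ≤ 1 := by
        apply max_le zero_le_one
        apply Finset.sup'_le
        intro p hp
        rw [hT, Finset.mem_filter] at hp
        rw [hf]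
        rw [div_le_one (by exact_mod_cast hp.2)]
        have := h2 p hp.1 hp.2
        rw [hcast p]
        linarith
      have key : ∀ p ∈ F, rpl_dotR p.1 x - (p.2 : ℝ) ≤ t * ((rpl_cQ v p : ℚ) : ℝ) := by
        intro p hp
        rcases lt_trichotomy (rpl_cQ v p) 0 with hc | hc | hc
        · have hcr : (0:ℝ) < -((rpl_cQ v p : ℚ) : ℝ) := by
            rw [neg_pos]; exact_mod_cast hc
          rcases max_choice 0 (T.sup' hTne f) with hmax | hmax
          · rw [htdef, hmax, zero_mul]
            linarith [h1 p hp (le_of_lt hc)]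
          · obtain ⟨r, hrT, hrs⟩ := Finset.exists_mem_eq_sup' hTne f
            rw [hT, Finset.mem_filter] at hrT
            have hcr' : (0:ℝ) < ((rpl_cQ v r : ℚ) : ℝ) := by exact_mod_cast hrT.2
            rw [htdef, hmax, hrs, hf]
            simp only
            rw [div_mul_eq_mul_div, le_div_iff₀ hcr']
            have := h3 r hrT.1 p hp hrT.2 hc
            nlinarith
        · rw [hc]
          simpa using h1 p hp (le_of_eq hc)
        · have hp' : p ∈ T := by rw [hT, Finset.mem_filter]; exact ⟨hp, hc⟩
          have hcr : (0:ℝ) < ((rpl_cQ v p : ℚ) : ℝ) := by exact_mod_cast hc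
          have : f p ≤ t := le_trans (Finset.le_sup' f hp') (le_max_right _ _)
          rw [hf] at this
          simp only at this
          rw [div_le_iff₀ hcr] at this
          linarith
      rcases eq_or_lt_of_le ht1 with ht1' | ht1'
      · have hy : ∀ p ∈ F, rpl_dotR p.1 (x - rpl_rho v) ≤ 0 := by
          intro p hp
          rw [rpl_dotR_sub, rpl_dotR_rho]
          have := key p hp
          rw [ht1', one_mul, hcast p] at this
          linarith
        have hx_eq : x = rpl_rho v := by
          by_contra hne
          obtain ⟨R, hR⟩ := hbdd
          obtain ⟨z₀, hz₀⟩ := hsne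
          have hz₀' : z₀ ∈ rpl_sat F := by rw [hF]; exact subset_convexHull ℝ s hz₀
          have hRz : ∀ z ∈ rpl_sat F, ‖z‖ ≤ R := by
            intro z hzz; exact hR z (hF ▸ hzz)
          set y := x - rpl_rho v with hy'
          have hyne : y ≠ 0 := fun h => hne (by rwa [hy', sub_eq_zero] at h)
          have hyn : (0:ℝ) < ‖y‖ := norm_pos_iff.mpr hyne
          set lam : ℝ := (2 * R + 1) / ‖y‖ with hlam
          have hR0 : 0 ≤ R := le_trans (norm_nonneg z₀) (hR z₀ (subset_convexHull ℝ s hz₀))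
          have hlam0 : 0 ≤ lam := by
            apply div_nonneg _ (le_of_lt hyn)
            linarith
          have hmem : z₀ + lam • y ∈ rpl_sat F := by
            intro p hp
            rw [rpl_dotR_add, rpl_dotR_smul]
            have := hy p hp
            have := hz₀' p hp
            nlinarith
          have hb := hRz _ hmem
          have hnorm : ‖lam • y‖ = 2 * R + 1 := by
            rw [norm_smul, Real.norm_eq_abs, abs_of_nonneg hlam0, hlam,
              div_mul_cancel₀ _ (ne_of_gt hyn)]
          have htri := norm_sub_le (z₀ + lam • y) z₀
          rw [add_sub_cancel_left, hnorm] at htri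
          have hz0R : ‖z₀‖ ≤ R := hR z₀ (subset_convexHull ℝ s hz₀)
          linarith
        rw [hx_eq]
        rw [mem_convexJoin]
        obtain ⟨z₀, hz₀⟩ := hullne
        exact ⟨rpl_rho v, rfl, z₀, hz₀, left_mem_segment ℝ _ _⟩
      · set z := (1 - t)⁻¹ • (x - t • rpl_rho v) with hz
        have h1t : (0:ℝ) < 1 - t := by linarith
        have hzF : z ∈ rpl_sat F := by
          intro p hp
          rw [hz, rpl_dotR_smul, rpl_dotR_sub, rpl_dotR_smul, rpl_dotR_rho]
          rw [inv_mul_le_iff₀ h1t]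
          have := key p hp
          rw [hcast p] at this
          nlinarith
        have hxseg : x ∈ segment ℝ (rpl_rho v) z := by
          refine ⟨t, 1 - t, ht0, le_of_lt h1t, by ring, ?_⟩
          rw [hz, smul_inv_smul₀ (ne_of_gt h1t)]
          abel
        rw [mem_convexJoin]
        exact ⟨rpl_rho v, rfl, z, by rw [← hF]; exact hzF, hxseg⟩
    · have hxF : x ∈ rpl_sat F := by
        intro p hp
        rcases le_or_gt (rpl_cQ v p) 0 with hc | hc
        · exact h1 p hp hc
        · exact absurd ⟨p, by rw [hT, Finset.mem_filter]; exact ⟨hp, hc⟩⟩ hTne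
      rw [hF] at hxF
      rw [mem_convexJoin]
      exact ⟨rpl_rho v, rfl, x, hxF, right_mem_segment ℝ _ _⟩
  · intro hx
    rw [mem_convexJoin] at hx
    obtain ⟨a, ha, z, hz, hseg⟩ := hx
    rw [Set.mem_singleton_iff] at ha
    subst ha
    rw [← hF] at hz
    obtain ⟨ta, tb, hta, htb, htab, hsum⟩ := hseg
    intro p hp
    simp only [rpl_FStep, Finset.mem_union, Finset.mem_image, Finset.mem_filter,
      Finset.mem_product] at hp
    have hdx : ∀ a' : Fin n → ℚ, rpl_dotR a' x = ta * (rpl_dotQ a' v : ℝ) + tb * rpl_dotR a' z := by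
      intro a'
      rw [← hsum, rpl_dotR_add, rpl_dotR_smul, rpl_dotR_smul, rpl_dotR_rho]
    rcases hp with (⟨hpF, hc⟩ | ⟨r, ⟨hrF, hc⟩, rfl⟩) | ⟨⟨r, q⟩, ⟨⟨hrF, hcr⟩, hqF, hcq⟩, rfl⟩
    · have hcle : ((rpl_dotQ p.1 v : ℚ) : ℝ) ≤ (p.2 : ℝ) := by
        have : ((rpl_cQ v p : ℚ) : ℝ) ≤ 0 := by exact_mod_cast hc
        rw [hcast p] at this; linarith
      have hzp := hz p hpF
      rw [hdx]
      have h5 := mul_le_mul_of_nonneg_left hcle hta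
      have h6 := mul_le_mul_of_nonneg_left hzp htb
      have h7 : ta * ((p.2:ℚ):ℝ) + tb * ((p.2:ℚ):ℝ) = ((p.2:ℚ):ℝ) := by
        rw [← add_mul, htab, one_mul]
      linarith
    · have hzr := hz r hrF
      have hcr : (0:ℝ) < (rpl_dotQ r.1 v : ℝ) - (r.2 : ℝ) := by
        have : (0:ℝ) < ((rpl_cQ v r : ℚ) : ℝ) := by exact_mod_cast hc
        rwa [hcast r] at this
      simp only
      rw [hdx]
      have h5 : tb * rpl_dotR r.1 z ≤ tb * ((r.2:ℚ):ℝ) := mul_le_mul_of_nonneg_left hzr htb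
      have h6 : tb * ((r.2:ℚ):ℝ) ≤ tb * ((rpl_dotQ r.1 v : ℚ):ℝ) := by
        apply mul_le_mul_of_nonneg_left _ htb
        linarith
      have h7 : ta * ((rpl_dotQ r.1 v : ℚ):ℝ) + tb * ((rpl_dotQ r.1 v : ℚ):ℝ)
          = ((rpl_dotQ r.1 v : ℚ):ℝ) := by
        rw [← add_mul, htab, one_mul]
      linarith
    · simp only
      rw [rpl_dotR_combo, hdx, hdx]
      have hzr := hz r hrF
      have hzq := hz q hqF
      have hcr' : (0:ℝ) < ((rpl_cQ v r : ℚ) : ℝ) := by exact_mod_cast hcr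
      have hcq' : ((rpl_cQ v q : ℚ) : ℝ) < 0 := by exact_mod_cast hcq
      rw [hcast r] at hcr'
      rw [hcast q] at hcq'
      push_cast
      rw [hcast r, hcast q]
      set rv := ((rpl_dotQ r.1 v : ℚ):ℝ)
      set qv := ((rpl_dotQ q.1 v : ℚ):ℝ)
      set rz := rpl_dotR r.1 z
      set qz := rpl_dotR q.1 z
      set r2 := ((r.2 : ℚ):ℝ)
      set q2 := ((q.2 : ℚ):ℝ)
      have hA' : ta * ((rv - r2) * qv - (qv - q2) * rv)
          = ta * ((rv - r2) * q2 - (qv - q2) * r2) := by ring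
      have hB : (rv - r2) * qz - (qv - q2) * rz ≤ (rv - r2) * q2 - (qv - q2) * r2 := by
        nlinarith [mul_le_mul_of_nonneg_left hzq (le_of_lt hcr'),
          mul_le_mul_of_nonneg_left hzr (by linarith : (0:ℝ) ≤ -(qv - q2))]
      have hC : tb * ((rv - r2) * qz - (qv - q2) * rz)
          ≤ tb * ((rv - r2) * q2 - (qv - q2) * r2) := mul_le_mul_of_nonneg_left hB htb
      have h7 : ta * ((rv - r2) * q2 - (qv - q2) * r2) + tb * ((rv - r2) * q2 - (qv - q2) * r2)
          = (rv - r2) * q2 - (qv - q2) * r2 := by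
        rw [← add_mul, htab, one_mul]
      nlinarith [hA', hC, h7]

lemma rpl_hrep (L : List (Fin n → ℚ)) (hL : L ≠ []) :
    ∃ F : Finset ((Fin n → ℚ) × ℚ), rpl_sat F = convexHull ℝ (rpl_rho '' {w | w ∈ L}) := by
  induction L with
  | nil => exact absurd rfl hL
  | cons v L' ih =>
    by_cases hL' : L' = []
    · subst hL'
      obtain ⟨F, hF⟩ := rpl_base_case (n := n) v
      refine ⟨F, ?_⟩
      have h : rpl_rho '' {w : Fin n → ℚ | w ∈ [v]} = {rpl_rho v} := by simp
      rw [h, convexHull_singleton, hF]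
    · obtain ⟨F, hF⟩ := ih hL'
      have hsne : (rpl_rho '' {w : Fin n → ℚ | w ∈ L'}).Nonempty := by
        obtain ⟨w, hw⟩ := List.exists_mem_of_ne_nil L' hL'
        exact ⟨rpl_rho w, ⟨w, hw, rfl⟩⟩
      have hbdd : ∃ R, ∀ z ∈ convexHull ℝ (rpl_rho '' {w : Fin n → ℚ | w ∈ L'}), ‖z‖ ≤ R := by
        have hfin : (rpl_rho '' {w : Fin n → ℚ | w ∈ L'}).Finite := (List.finite_toSet L').image _
        exact isBounded_iff_forall_norm_le.mp (hfin.isCompact_convexHull (𝕜 := ℝ)).isBounded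
      refine ⟨rpl_FStep v F, ?_⟩
      rw [rpl_step_case v F _ hsne hbdd hF]
      congr 1
      have h : {w : Fin n → ℚ | w ∈ v :: L'} = insert v {w : Fin n → ℚ | w ∈ L'} := by
        ext w; simp
      rw [h, Set.image_insert_eq]

end Aux

theorem rational_polytope_lattice_dist_lower_bound
    {n : ℕ} (V : Finset (EuclideanSpace ℝ (Fin n))) (hV : V.Nonempty)
    (hpos : ∀ v ∈ V, ∀ i, 0 ≤ v i)
    (hrat : ∀ v ∈ V, ∀ i, ∃ q : ℚ, v i = (q : ℝ))
    (S : Set (EuclideanSpace ℝ (Fin n)))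
    (hS : S = convexHull ℝ (V : Set (EuclideanSpace ℝ (Fin n)))) :
    ∃ δ : ℝ, 0 < δ ∧ ∀ m : ℕ, 0 < m →
      ∀ s ∈ (m : ℝ) • S,
      ∀ u : EuclideanSpace ℝ (Fin n), (∀ i, ∃ k : ℕ, u i = (k : ℝ)) →
      u ∉ (m : ℝ) • S → δ ≤ dist s u := by
  classical
  have hchoice : ∀ v ∈ V, ∃ w : Fin n → ℚ, rpl_rho w = v := by
    intro v hv
    refine ⟨fun j => (hrat v hv j).choose, ?_⟩
    ext j
    exact ((hrat v hv j).choose_spec).symm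
  choose φ hφ using hchoice
  set L : List (Fin n → ℚ) := V.attach.toList.map (fun v => φ v.1 v.2) with hL
  have hLne : L ≠ [] := by
    rw [hL]
    simp only [ne_eq, List.map_eq_nil_iff, Finset.toList_eq_nil, Finset.attach_eq_empty_iff]
    exact Finset.nonempty_iff_ne_empty.mp hV
  have himg : rpl_rho '' {w : Fin n → ℚ | w ∈ L} = (V : Set (EuclideanSpace ℝ (Fin n))) := by
    ext x
    constructor
    · rintro ⟨w, hw, rfl⟩
      rw [hL] at hw
      simp only [Set.mem_setOf_eq, List.mem_map, Finset.mem_toList, Finset.mem_attach,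
        true_and] at hw
      obtain ⟨v, hv⟩ := hw
      rw [← hv, hφ]
      exact v.2
    · intro hx
      refine ⟨φ x hx, ?_, hφ x hx⟩
      rw [hL]
      simp only [Set.mem_setOf_eq, List.mem_map, Finset.mem_toList, Finset.mem_attach, true_and]
      exact ⟨⟨x, hx⟩, rfl⟩
  obtain ⟨F, hF⟩ := rpl_hrep L hLne
  have hSF : S = rpl_sat F := by rw [hS, ← himg, hF]
  set D : ℕ := ∏ p ∈ F, ((∏ j, (p.1 j).den) * p.2.den) with hD
  have hD0 : 0 < D := by
    apply Finset.prod_pos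
    intro p _
    exact Nat.mul_pos (Finset.prod_pos fun j _ => (p.1 j).den_pos) p.2.den_pos
  have hDR : (0:ℝ) < (D:ℝ) := by exact_mod_cast hD0
  set M : ℝ := 1 + ∑ p ∈ F, ∑ j, |((p.1 j : ℚ) : ℝ)| with hM
  have hsum0 : 0 ≤ ∑ p ∈ F, ∑ j, |((p.1 j : ℚ) : ℝ)| :=
    Finset.sum_nonneg fun p _ => Finset.sum_nonneg fun j _ => abs_nonneg _
  have hM0 : 0 < M := by rw [hM]; linarith
  refine ⟨1 / ((D:ℝ) * M), by positivity, ?_⟩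
  intro m hm s hs u hu hun
  have hmR : (0:ℝ) < (m:ℝ) := by exact_mod_cast hm
  choose k hk using hu
  -- find a violated constraint
  have hviol : ∃ p ∈ F, (m:ℝ) * (p.2:ℝ) < rpl_dotR p.1 u := by
    by_contra hcon
    push_neg at hcon
    apply hun
    rw [Set.mem_smul_set]
    refine ⟨(m:ℝ)⁻¹ • u, ?_, smul_inv_smul₀ (ne_of_gt hmR) u⟩
    rw [hSF]
    intro p hp
    rw [rpl_dotR_smul, inv_mul_le_iff₀ hmR]
    exact hcon p hp
  obtain ⟨p, hpF, hpv⟩ := hviol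
  rw [Set.mem_smul_set] at hs
  obtain ⟨y, hyS, rfl⟩ := hs
  rw [hSF] at hyS
  have hsle : rpl_dotR p.1 ((m:ℝ) • y) ≤ (m:ℝ) * (p.2:ℝ) := by
    rw [rpl_dotR_smul]
    exact mul_le_mul_of_nonneg_left (hyS p hpF) (le_of_lt hmR)
  -- rational value of the lattice point
  set qu : ℚ := ∑ j, p.1 j * (k j : ℚ) with hqu
  have hqu' : rpl_dotR p.1 u = (qu : ℝ) := by
    rw [hqu]
    push_cast
    apply Finset.sum_congr rfl
    intro j _
    rw [hk j]
  have hq : (m:ℚ) * p.2 < qu := by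
    rw [hqu'] at hpv
    exact_mod_cast hpv
  -- integrality
  have hint : ∀ q : ℚ, q.den ∣ D → ∃ z : ℤ, (D:ℚ) * q = z := by
    intro q hdvd
    obtain ⟨e, he⟩ := hdvd
    refine ⟨(e : ℤ) * q.num, ?_⟩
    have hq2 : (q.den : ℚ) * q = q.num := by
      rw [mul_comm]; exact_mod_cast Rat.mul_den_eq_num q
    rw [he]
    push_cast
    calc ((q.den:ℚ) * e) * q = e * ((q.den:ℚ) * q) := by ring
    _ = e * q.num := by rw [hq2]
  have hbden : p.2.den ∣ D := by
    refine dvd_trans ⟨∏ j, (p.1 j).den, mul_comm _ _⟩ (Finset.dvd_prod_of_mem _ hpF)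
  have haden : ∀ j, (p.1 j).den ∣ D := by
    intro j
    refine dvd_trans (dvd_mul_of_dvd_left (Finset.dvd_prod_of_mem _ (Finset.mem_univ j)) _)
      (Finset.dvd_prod_of_mem _ hpF)
  obtain ⟨zb, hzb⟩ := hint p.2 hbden
  have ha : ∃ z : ℤ, (D:ℚ) * qu = z := by
    choose z hz using fun j => hint (p.1 j) (haden j)
    refine ⟨∑ j, z j * (k j : ℤ), ?_⟩
    rw [hqu, Finset.mul_sum]
    push_cast
    apply Finset.sum_congr rfl
    intro j _
    rw [← mul_assoc, hz j]
  obtain ⟨za, hza⟩ := ha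
  have hzlt : (m:ℤ) * zb < za := by
    have hlt : ((m:ℤ) * zb : ℚ) < (za:ℚ) := by
      push_cast
      rw [← hzb, ← hza]
      have hDQ : (0:ℚ) < (D:ℚ) := by exact_mod_cast hD0
      nlinarith
    exact_mod_cast hlt
  have hgap : 1/(D:ℚ) ≤ qu - (m:ℚ) * p.2 := by
    have h1 : (m:ℤ) * zb + 1 ≤ za := hzlt
    have hDQ : (0:ℚ) < (D:ℚ) := by exact_mod_cast hD0
    rw [div_le_iff₀ hDQ]
    have he : (qu - (m:ℚ)*p.2) * D = (za:ℚ) - (m:ℚ)*(zb:ℚ) := by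
      calc (qu - (m:ℚ)*p.2) * D = (D:ℚ)*qu - (m:ℚ)*((D:ℚ)*p.2) := by ring
      _ = (za:ℚ) - (m:ℚ)*(zb:ℚ) := by rw [hza, hzb]
    rw [he]
    have : ((m:ℤ) * zb + 1 : ℚ) ≤ (za : ℚ) := by exact_mod_cast h1
    push_cast at this
    linarith
  have hgapR : 1/(D:ℝ) ≤ rpl_dotR p.1 u - rpl_dotR p.1 ((m:ℝ) • y) := by
    have hR' : (1/(D:ℝ)) ≤ (qu:ℝ) - (m:ℝ)*(p.2:ℝ) := by
      have h := (Rat.cast_le (K := ℝ)).mpr hgap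
      push_cast at h
      linarith
    rw [hqu']
    linarith
  have hcoord : ∀ j, |u j - ((m:ℝ) • y) j| ≤ dist ((m:ℝ) • y) u := by
    intro j
    rw [EuclideanSpace.dist_eq]
    have h1 : dist (((m:ℝ) • y) j) (u j) ^ 2 ≤ ∑ i, dist (((m:ℝ) • y) i) (u i) ^ 2 :=
      Finset.single_le_sum (f := fun i => dist (((m:ℝ) • y) i) (u i) ^ 2)
        (fun i _ => sq_nonneg _) (Finset.mem_univ j)
    have h2 := Real.sqrt_le_sqrt h1
    rw [Real.sqrt_sq dist_nonneg] at h2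
    calc |u j - ((m:ℝ) • y) j| = dist (((m:ℝ) • y) j) (u j) := by
          rw [Real.dist_eq, abs_sub_comm]
    _ ≤ _ := h2
  have hbound : rpl_dotR p.1 u - rpl_dotR p.1 ((m:ℝ) • y)
      ≤ (∑ j, |((p.1 j:ℚ):ℝ)|) * dist ((m:ℝ) • y) u := by
    have he : rpl_dotR p.1 u - rpl_dotR p.1 ((m:ℝ) • y)
        = ∑ j, ((p.1 j:ℚ):ℝ) * (u j - ((m:ℝ) • y) j) := by
      unfold rpl_dotR
      rw [← Finset.sum_sub_distrib]
      apply Finset.sum_congr rfl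
      intro j _; ring
    rw [he, Finset.sum_mul]
    apply Finset.sum_le_sum
    intro j _
    calc ((p.1 j:ℚ):ℝ) * (u j - ((m:ℝ) • y) j) ≤ |((p.1 j:ℚ):ℝ) * (u j - ((m:ℝ) • y) j)| :=
          le_abs_self _
    _ = |((p.1 j:ℚ):ℝ)| * |u j - ((m:ℝ) • y) j| := abs_mul _ _
    _ ≤ |((p.1 j:ℚ):ℝ)| * dist ((m:ℝ) • y) u :=
          mul_le_mul_of_nonneg_left (hcoord j) (abs_nonneg _)
  have hsum_le : (∑ j, |((p.1 j:ℚ):ℝ)|) ≤ M := by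
    rw [hM]
    have h1 : (∑ j, |((p.1 j:ℚ):ℝ)|) ≤ ∑ p' ∈ F, ∑ j, |((p'.1 j:ℚ):ℝ)| :=
      Finset.single_le_sum (f := fun p' => ∑ j, |((p'.1 j:ℚ):ℝ)|)
        (fun p' _ => Finset.sum_nonneg fun j _ => abs_nonneg _) hpF
    linarith
  have hdn : 0 ≤ dist ((m:ℝ) • y) u := dist_nonneg
  have hfin : 1/(D:ℝ) ≤ M * dist ((m:ℝ) • y) u := by
    calc 1/(D:ℝ) ≤ rpl_dotR p.1 u - rpl_dotR p.1 ((m:ℝ) • y) := hgapR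
    _ ≤ (∑ j, |((p.1 j:ℚ):ℝ)|) * dist ((m:ℝ) • y) u := hbound
    _ ≤ M * dist ((m:ℝ) • y) u := mul_le_mul_of_nonneg_right hsum_le hdn
  rw [div_le_iff₀ (by positivity)]
  have h2 : (1:ℝ) = (D:ℝ) * (1/(D:ℝ)) := by field_simp
  calc (1:ℝ) = (D:ℝ) * (1/(D:ℝ)) := h2
  _ ≤ (D:ℝ) * (M * dist ((m:ℝ) • y) u) := mul_le_mul_of_nonneg_left hfin (le_of_lt hDR)
  _ = dist ((m:ℝ) • y) u * ((D:ℝ) * M) := by ring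
end

section
/- Let S = ch{v₁, …, v_N} be the convex hull of a finite nonempty set of points in ℝⁿ and let s ∈ (n+1)S. Then s can be written as s = t + a with t ∈ nS and a an extreme point of S. -/
open Pointwise

lemma extreme_of_not_mem_erase {E : Type*} [AddCommGroup E] [Module ℝ E] [DecidableEq E]
    (W : Finset E) (w : E) (hw : w ∈ W)
    (h : w ∉ convexHull ℝ (↑(W.erase w) : Set E)) :
    w ∈ Set.extremePoints ℝ (convexHull ℝ (W : Set E)) := by
  classical
  rcases (W.erase w).eq_empty_or_nonempty with he | hne
  · have hW : W = {w} := by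
      rcases (Finset.erase_eq_empty_iff W w).1 he with h1 | h1
      · exact absurd (h1 ▸ hw) (Finset.notMem_empty w)
      · exact h1
    rw [hW]
    simp [extremePoints_singleton]
  · have hWins : (W : Set E) = insert w (↑(W.erase w) : Set E) := by
      rw [← Finset.coe_insert, Finset.insert_erase hw]
    have hBne : (↑(W.erase w) : Set E).Nonempty := by exact_mod_cast hne
    rw [mem_extremePoints]
    refine ⟨subset_convexHull ℝ _ hw, ?_⟩
    intro x₁ h₁ x₂ h₂ hseg
    rw [hWins, convexHull_insert hBne, mem_convexJoin] at h₁ h₂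
    obtain ⟨u₁, hu₁, y', hy', hy⟩ := h₁
    obtain ⟨u₂, hu₂, z', hz', hz⟩ := h₂
    rw [Set.mem_singleton_iff] at hu₁ hu₂
    rw [hu₁] at hy
    rw [hu₂] at hz
    obtain ⟨a₁, b₁, ha₁, hb₁, hab₁, hx₁⟩ := hy
    obtain ⟨a₂, b₂, ha₂, hb₂, hab₂, hx₂⟩ := hz
    obtain ⟨c, d, hc, hd, hcd, hww⟩ := hseg
    set p : ℝ := c * b₁ + d * b₂ with hp
    have key : p • w = (c * b₁) • y' + (d * b₂) • z' := by
      have expand : c • x₁ + d • x₂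
          = (c * a₁ + d * a₂) • w + ((c * b₁) • y' + (d * b₂) • z') := by
        rw [← hx₁, ← hx₂]; module
      have hcoef : c * a₁ + d * a₂ = 1 - p := by
        have : c * (a₁ + b₁) + d * (a₂ + b₂) = 1 := by rw [hab₁, hab₂]; linarith
        rw [hp]; nlinarith
      have e2 : w = (1 - p) • w + ((c * b₁) • y' + (d * b₂) • z') := by
        calc w = c • x₁ + d • x₂ := hww.symm
          _ = (c * a₁ + d * a₂) • w + ((c * b₁) • y' + (d * b₂) • z') := expand
          _ = (1 - p) • w + ((c * b₁) • y' + (d * b₂) • z') := by rw [hcoef]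
      have e3 : p • w
          = ((1 - p) • w + ((c * b₁) • y' + (d * b₂) • z')) - (1 - p) • w := by
        rw [← e2]; module
      rw [e3]; abel
    rcases eq_or_lt_of_le (show (0:ℝ) ≤ p by positivity) with hp0 | hp0
    · -- p = 0, so b₁ = b₂ = 0
      have hb₁0 : b₁ = 0 := by nlinarith [mul_nonneg hc.le hb₁, mul_nonneg hd.le hb₂]
      have hb₂0 : b₂ = 0 := by nlinarith [mul_nonneg hc.le hb₁, mul_nonneg hd.le hb₂]
      have ha₁1 : a₁ = 1 := by linarith
      have ha₂1 : a₂ = 1 := by linarith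
      constructor
      · rw [← hx₁, hb₁0, ha₁1]; simp
      · rw [← hx₂, hb₂0, ha₂1]; simp
    · -- p > 0, contradiction: w ∈ convexHull (erase)
      exfalso
      apply h
      have hpne : p ≠ 0 := ne_of_gt hp0
      have hwrep : w = (p⁻¹ * (c * b₁)) • y' + (p⁻¹ * (d * b₂)) • z' := by
        have h2 := congrArg (fun v => p⁻¹ • v) key
        simp only [smul_smul, smul_add] at h2
        rwa [inv_mul_cancel₀ hpne, one_smul] at h2
      have hmem2 : (p⁻¹ * (c * b₁)) • y' + (p⁻¹ * (d * b₂)) • z'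
          ∈ convexHull ℝ (↑(W.erase w) : Set E) := by
        refine (convex_convexHull ℝ _) hy' hz' ?_ ?_ ?_
        · positivity
        · positivity
        · rw [← mul_add, ← hp, inv_mul_cancel₀ hpne]
      rwa [← hwrep] at hmem2

lemma convexHull_subset_convexHull_extremePoints {E : Type*} [AddCommGroup E] [Module ℝ E] [DecidableEq E]
    (W : Finset E) :
    convexHull ℝ (W : Set E) ⊆
      convexHull ℝ (Set.extremePoints ℝ (convexHull ℝ (W : Set E))) := by
  classical
  induction W using Finset.strongInductionOn with
  | _ W ih =>
    by_cases hall : ∀ w ∈ W, w ∉ convexHull ℝ (↑(W.erase w) : Set E)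
    · apply convexHull_min _ (convex_convexHull ℝ _)
      intro w hw
      exact subset_convexHull ℝ _ (extreme_of_not_mem_erase W w hw (hall w hw))
    · push_neg at hall
      obtain ⟨w, hw, hmem⟩ := hall
      have heq : convexHull ℝ (W : Set E) = convexHull ℝ (↑(W.erase w) : Set E) := by
        apply le_antisymm
        · apply convexHull_min _ (convex_convexHull ℝ _)
          intro x hx
          by_cases hxw : x = w
          · rwa [hxw]
          · exact subset_convexHull ℝ _ (Finset.mem_erase.2 ⟨hxw, hx⟩)
        · exact convexHull_mono (Finset.erase_subset w W)
      rw [heq]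
      exact ih (W.erase w) (Finset.erase_ssubset hw)

theorem dilate_succ_eq_dilate_add_extreme_point
    {n : ℕ} (V : Finset (EuclideanSpace ℝ (Fin n))) (hV : V.Nonempty)
    (S : Set (EuclideanSpace ℝ (Fin n)))
    (hS : S = convexHull ℝ (V : Set (EuclideanSpace ℝ (Fin n))))
    (s : EuclideanSpace ℝ (Fin n)) (hs : s ∈ ((n + 1 : ℕ) : ℝ) • S) :
    ∃ t ∈ (n : ℝ) • S, ∃ a ∈ Set.extremePoints ℝ S, s = t + a := by
  classical
  obtain ⟨x, hxS, hsx'⟩ := hs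
  have hsx : ((n + 1 : ℕ) : ℝ) • x = s := hsx'
  have hSconv : Convex ℝ S := hS ▸ convex_convexHull ℝ _
  -- the extreme points: S = convexHull of the extreme points' finset
  set E' : Finset (EuclideanSpace ℝ (Fin n)) :=
    V.filter (fun v => v ∈ Set.extremePoints ℝ S) with hE'
  have hE'sub : (E' : Set (EuclideanSpace ℝ (Fin n))) ⊆ Set.extremePoints ℝ S := by
    intro v hv
    exact (Finset.mem_filter.1 hv).2
  have hScvE : S ⊆ convexHull ℝ (E' : Set (EuclideanSpace ℝ (Fin n))) := by
    rw [hS]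
    refine (convexHull_subset_convexHull_extremePoints V).trans (convexHull_mono ?_)
    intro v hv
    have hvV : v ∈ (V : Set (EuclideanSpace ℝ (Fin n))) :=
      extremePoints_convexHull_subset hv
    rw [hE']
    exact Finset.mem_coe.2 (Finset.mem_filter.2 ⟨hvV, hS ▸ hv⟩)
  -- Carathéodory: x is in convexHull of an affinely independent finset t ⊆ E'
  have hx' := hScvE hxS
  rw [convexHull_eq_union] at hx'
  simp only [Set.mem_iUnion] at hx'
  obtain ⟨t, hts, hai, hxt⟩ := hx'
  have hcard : t.card ≤ n + 1 := by
    have h1 := hai.card_le_finrank_succ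
    have h2 : Module.finrank ℝ (vectorSpan ℝ (Set.range ((↑) : t → EuclideanSpace ℝ (Fin n))))
        ≤ Module.finrank ℝ (EuclideanSpace ℝ (Fin n)) := Submodule.finrank_le _
    rw [finrank_euclideanSpace_fin] at h2
    simpa using h1.trans (by omega)
  -- obtain weights
  rw [Finset.convexHull_eq] at hxt
  obtain ⟨w, hw0, hw1, hwx⟩ := hxt
  have htne : t.Nonempty := by
    rcases t.eq_empty_or_nonempty with h | h
    · rw [h] at hw1; simp at hw1
    · exact h
  -- pigeonhole: some weight at least 1/(n+1)
  have hpigeon : ∃ a ∈ t, 1 ≤ ((n : ℝ) + 1) * w a := by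
    by_contra hcon
    push_neg at hcon
    have : ((n : ℝ) + 1) = ∑ i ∈ t, ((n : ℝ) + 1) * w i := by
      rw [← Finset.mul_sum, hw1, mul_one]
    have hlt : ∑ i ∈ t, ((n : ℝ) + 1) * w i < ∑ _i ∈ t, (1 : ℝ) :=
      Finset.sum_lt_sum_of_nonempty htne (fun i hi => hcon i hi)
    rw [Finset.sum_const, nsmul_eq_mul, mul_one] at hlt
    have : ((n : ℝ) + 1) < t.card := by linarith
    have : (n : ℝ) + 1 < (n : ℝ) + 1 := by
      calc (n : ℝ) + 1 < t.card := this
        _ ≤ (n : ℝ) + 1 := by exact_mod_cast hcard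
    linarith
  obtain ⟨a, hat, hwa⟩ := hpigeon
  have haE : a ∈ Set.extremePoints ℝ S := hE'sub (hts hat)
  have haS : a ∈ S := extremePoints_subset haE
  -- rewrite s
  have hxeq : x = ∑ i ∈ t, w i • (i : EuclideanSpace ℝ (Fin n)) := by
    rw [← hwx, t.centerMass_eq_of_sum_1 _ hw1]
    simp [id]
  have hsum : s = ∑ i ∈ t, (((n : ℝ) + 1) * w i) • (i : EuclideanSpace ℝ (Fin n)) := by
    rw [← hsx, hxeq, Finset.smul_sum]
    push_cast
    simp [smul_smul]
  rcases Nat.eq_zero_or_pos n with hn | hn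
  · -- n = 0: trivial space considerations
    subst hn
    have hsub : ∀ x y : EuclideanSpace ℝ (Fin 0), x = y := fun x y =>
      PiLp.ext fun i => i.elim0
    refine ⟨0, ?_, a, haE, ?_⟩
    · simp only [Nat.cast_zero, zero_smul]
      rw [Set.zero_smul_set ⟨x, hxS⟩]
      rfl
    · rw [zero_add]; exact hsub s a
  · -- n ≥ 1
    set w' : EuclideanSpace ℝ (Fin n) → ℝ :=
      fun i => ((n : ℝ) + 1) * w i - (if i = a then 1 else 0) with hw'
    have hw'0 : ∀ i ∈ t, 0 ≤ w' i := by
      intro i hi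
      by_cases hia : i = a
      · have heq : w' i = ((n : ℝ) + 1) * w a - 1 := by rw [hw']; simp [hia]
        rw [heq]; linarith
      · have heq : w' i = ((n : ℝ) + 1) * w i := by rw [hw']; simp [hia]
        rw [heq]
        have := hw0 i hi
        positivity
    have hw'sum : ∑ i ∈ t, w' i = (n : ℝ) := by
      simp only [hw']
      rw [Finset.sum_sub_distrib, ← Finset.mul_sum, hw1, mul_one,
        Finset.sum_ite_eq' t a (fun _ => (1:ℝ)), if_pos hat]
      ring
    have hnpos : (0 : ℝ) < (n : ℝ) := by exact_mod_cast hn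
    have hy : t.centerMass w' id ∈ S := by
      rw [hS]
      apply Finset.centerMass_mem_convexHull t hw'0 (by rw [hw'sum]; exact hnpos)
      intro i hi
      have h1 : i ∈ E' := Finset.mem_coe.1 (hts hi)
      have h2 : i ∈ V := Finset.filter_subset _ V h1
      simpa [id] using Finset.mem_coe.2 h2
    refine ⟨(n : ℝ) • t.centerMass w' id, Set.smul_mem_smul_set hy, a, haE, ?_⟩
    have hntc : (n : ℝ) • t.centerMass w' id
        = ∑ i ∈ t, w' i • (i : EuclideanSpace ℝ (Fin n)) := by
      rw [Finset.centerMass, hw'sum, smul_smul, mul_inv_cancel₀ (ne_of_gt hnpos), one_smul]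
      simp [id]
    have hsplit : ∑ i ∈ t, w' i • (i : EuclideanSpace ℝ (Fin n))
        = (∑ i ∈ t, (((n : ℝ) + 1) * w i) • (i : EuclideanSpace ℝ (Fin n))) - a := by
      simp only [hw', sub_smul, ite_smul, one_smul, zero_smul]
      rw [Finset.sum_sub_distrib, Finset.sum_ite_eq' t a, if_pos hat]
    rw [hntc, hsplit, hsum]
    abel
end

section
/- Let S = ch{v₁, …, v_N} be the convex hull of a finite nonempty set of points in ℝⁿ. Then for every integer m > n, mS = nS + Σ_{j=1}^{m−n} ext S; that is, mS equals the set of all points t + a₁ + ⋯ + a_{m−n} where t ∈ nS and each aⱼ is an extreme point of S. -/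
open Pointwise

lemma exists_nat_le_sum {α : Type*} (T : Finset α) (K : α → ℕ) :
    ∀ d : ℕ, d ≤ ∑ e ∈ T, K e → ∃ k : α → ℕ, (∀ e, k e ≤ K e) ∧ ∑ e ∈ T, k e = d := by
  classical
  induction T using Finset.induction with
  | empty => intro d hd; exact ⟨fun _ => 0, fun _ => Nat.zero_le _, by simpa using (Nat.le_zero.mp (by simpa using hd)).symm⟩
  | @insert a s ha ih =>
    intro d hd
    rw [Finset.sum_insert ha] at hd
    obtain ⟨k, hk, hks⟩ := ih (d - min d (K a)) (by omega)
    refine ⟨Function.update k a (min d (K a)), ?_, ?_⟩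
    · intro e
      rcases eq_or_ne e a with rfl | he
      · simp
      · simp [Function.update_of_ne he, hk e]
    · have hcong : ∑ x ∈ s, Function.update k a (min d (K a)) x = ∑ x ∈ s, k x :=
        Finset.sum_congr rfl fun e he => Function.update_of_ne (by rintro rfl; exact ha he) _ _
      rw [Finset.sum_insert ha, Function.update_self, hcong, hks]
      omega

lemma sum_mem_nat_smul {E : Type*} [AddCommGroup E] [Module ℝ E] {S : Set E}
    (hc : Convex ℝ S) (hne : S.Nonempty) (d : ℕ) (a : Fin d → E) (ha : ∀ j, a j ∈ S) :
    ∑ j, a j ∈ (d : ℝ) • S := by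
  induction d with
  | zero =>
    simp only [Finset.univ_eq_empty, Finset.sum_empty, Nat.cast_zero]
    rw [Set.zero_smul_set hne]
    exact Set.zero_mem_zero
  | succ d ih =>
    rw [Fin.sum_univ_castSucc]
    have h1 : ((d : ℝ) + 1) • S = (d : ℝ) • S + (1 : ℝ) • S :=
      hc.add_smul (by positivity) zero_le_one
    push_cast
    rw [h1]
    exact Set.add_mem_add (ih _ fun j => ha _) ⟨a (Fin.last d), ha _, one_smul ℝ _⟩

lemma flatMap_sum {α M : Type*} [AddCommMonoid M] (l : List α) (f : α → List M) :
    (l.flatMap f).sum = (l.map fun a => (f a).sum).sum := by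
  induction l with
  | nil => simp
  | cons a l ih => simp [ih]

lemma hull_ext {n : ℕ} (V : Finset (EuclideanSpace ℝ (Fin n))) :
    convexHull ℝ (V : Set (EuclideanSpace ℝ (Fin n))) =
      convexHull ℝ ((convexHull ℝ (V : Set (EuclideanSpace ℝ (Fin n)))).extremePoints ℝ) := by
  have hcomp : IsCompact (convexHull ℝ (V : Set (EuclideanSpace ℝ (Fin n)))) :=
    V.finite_toSet.isCompact_convexHull ℝ
  have hclosed : IsClosed (convexHull ℝ
      ((convexHull ℝ (V : Set (EuclideanSpace ℝ (Fin n)))).extremePoints ℝ)) :=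
    Set.Finite.isClosed_convexHull ℝ (V.finite_toSet.subset extremePoints_convexHull_subset)
  have h := closure_convexHull_extremePoints hcomp (convex_convexHull ℝ _)
  rw [hclosed.closure_eq] at h
  exact h.symm

theorem dilate_eq_dilate_add_sum_extreme_points
    {n : ℕ} (V : Finset (EuclideanSpace ℝ (Fin n))) (hV : V.Nonempty)
    (S : Set (EuclideanSpace ℝ (Fin n)))
    (hS : S = convexHull ℝ (V : Set (EuclideanSpace ℝ (Fin n))))
    (m : ℕ) (hm : n < m) :
    (m : ℝ) • S = {x | ∃ t ∈ (n : ℝ) • S, ∃ a : Fin (m - n) → EuclideanSpace ℝ (Fin n),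
      (∀ j, a j ∈ Set.extremePoints ℝ S) ∧ x = t + ∑ j, a j} := by
  classical
  have hSconv : Convex ℝ S := hS ▸ convex_convexHull ℝ _
  have hSne : S.Nonempty := by
    obtain ⟨v, hv⟩ := hV
    exact ⟨v, hS ▸ subset_convexHull ℝ _ hv⟩
  have hext : S = convexHull ℝ (S.extremePoints ℝ) := by rw [hS]; exact hull_ext V
  ext x
  constructor
  · rintro ⟨s, hs, rfl⟩
    rw [hext] at hs
    obtain ⟨ι, hι, z, w, hzs, hzind, hw0, hw1, hzw⟩ := eq_pos_convex_span_of_mem_convexHull hs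
    have hne : Nonempty ι := by
      rcases isEmpty_or_nonempty ι with h | h
      · rw [Finset.univ_eq_empty, Finset.sum_empty] at hw1; norm_num at hw1
      · exact h
    have hcard : Fintype.card ι ≤ n + 1 := by
      have h1 := hzind.card_le_finrank_succ
      have h2 : Module.finrank ℝ (vectorSpan ℝ (Set.range z)) ≤
          Module.finrank ℝ (EuclideanSpace ℝ (Fin n)) := Submodule.finrank_le _
      rw [finrank_euclideanSpace_fin] at h2
      omega
    set K : ι → ℕ := fun i => ⌊(m : ℝ) * w i⌋₊ with hK
    have hKge : ∀ i, (m : ℝ) * w i - 1 < (K i : ℝ) := fun i => Nat.sub_one_lt_floor _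
    have hKle : ∀ i, (K i : ℝ) ≤ (m : ℝ) * w i := fun i =>
      Nat.floor_le (mul_nonneg (Nat.cast_nonneg m) (hw0 i).le)
    have hKsum : m - n ≤ ∑ i, K i := by
      have h1 : (m : ℝ) - Fintype.card ι < ∑ i, (K i : ℝ) := by
        calc (m : ℝ) - Fintype.card ι = ∑ i : ι, ((m : ℝ) * w i - 1) := by
              rw [Finset.sum_sub_distrib, ← Finset.mul_sum, hw1, mul_one]
              simp [Finset.card_univ]
          _ < ∑ i, (K i : ℝ) :=
              Finset.sum_lt_sum_of_nonempty Finset.univ_nonempty (fun i _ => hKge i)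
      have hcard' : (Fintype.card ι : ℝ) ≤ (n : ℝ) + 1 := by exact_mod_cast hcard
      have h2 : ((m - n : ℕ) : ℝ) < ((∑ i, K i : ℕ) : ℝ) + 1 := by
        push_cast [Nat.cast_sub hm.le]
        linarith
      have h3 : (m - n : ℕ) < (∑ i, K i) + 1 := by exact_mod_cast h2
      omega
    obtain ⟨k, hkK, hksum⟩ := exists_nat_le_sum Finset.univ K (m - n) hKsum
    have hkle : ∀ i, (k i : ℝ) ≤ (m : ℝ) * w i := fun i =>
      le_trans (by exact_mod_cast hkK i) (hKle i)
    have hksum' : ∑ i, (k i : ℝ) = (m : ℝ) - n := by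
      have hcast := congrArg (Nat.cast : ℕ → ℝ) hksum
      push_cast [Nat.cast_sub hm.le] at hcast
      exact hcast
    set c : ι → ℝ := fun i => (m : ℝ) * w i - (k i : ℝ) with hc
    have hc0 : ∀ i, 0 ≤ c i := fun i => sub_nonneg.2 (hkle i)
    have hcsum : ∑ i, c i = (n : ℝ) := by
      simp only [hc, Finset.sum_sub_distrib, ← Finset.mul_sum, hw1, mul_one, hksum']
      ring
    set t : EuclideanSpace ℝ (Fin n) := ∑ i, c i • z i with ht
    have htmem : t ∈ (n : ℝ) • S := by
      rcases Nat.eq_zero_or_pos n with hn | hn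
      · have hczero : ∀ i ∈ Finset.univ, c i = 0 :=
          (Finset.sum_eq_zero_iff_of_nonneg (fun i _ => hc0 i)).1 (by rw [hcsum, hn]; norm_num)
        have ht0 : t = 0 := by
          rw [ht]
          exact Finset.sum_eq_zero fun i hi => by rw [hczero i hi, zero_smul]
        have hn0 : (n : ℝ) = 0 := by rw [hn]; norm_num
        rw [ht0, hn0, Set.zero_smul_set hSne]
        exact Set.zero_mem_zero
      · have hn' : (0 : ℝ) < n := by exact_mod_cast hn
        refine ⟨∑ i, (c i / n) • z i, ?_, ?_⟩
        · exact hSconv.sum_mem (fun i _ => div_nonneg (hc0 i) hn'.le)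
            (by rw [← Finset.sum_div, hcsum, div_self hn'.ne'])
            (fun i _ => extremePoints_subset (hzs ⟨i, rfl⟩))
        · show (n : ℝ) • ∑ i, (c i / (n : ℝ)) • z i = t
          rw [Finset.smul_sum, ht]
          refine Finset.sum_congr rfl fun i _ => ?_
          rw [smul_smul]
          congr 1
          field_simp
    set L : List (EuclideanSpace ℝ (Fin n)) :=
      (Finset.univ.toList (α := ι)).flatMap (fun i => List.replicate (k i) (z i)) with hL
    have hlen : L.length = m - n := by
      rw [hL, List.length_flatMap]
      have hmap : (Finset.univ.toList.map (List.length ∘ fun i => List.replicate (k i) (z i))) =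
          Finset.univ.toList.map k := by simp [Function.comp]
      simp only [List.length_replicate]
      rw [Finset.sum_map_toList]
      exact hksum
    have hLsum : L.sum = ∑ i, (k i : ℝ) • z i := by
      rw [hL, flatMap_sum]
      have hfun : (fun i => (List.replicate (k i) (z i)).sum) =
          fun i => (k i : ℝ) • z i := by
        funext i
        rw [List.sum_replicate, Nat.cast_smul_eq_nsmul]
      rw [hfun, Finset.sum_map_toList]
    set a : Fin (m - n) → EuclideanSpace ℝ (Fin n) :=
      fun j => L.get (Fin.cast hlen.symm j) with haL
    have hamem : ∀ j, a j ∈ Set.extremePoints ℝ S := by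
      intro j
      have hmem : a j ∈ L := List.get_mem L _
      rw [hL] at hmem
      obtain ⟨i, -, hi⟩ := List.mem_flatMap.1 hmem
      rw [List.eq_of_mem_replicate hi]
      exact hzs ⟨i, rfl⟩
    have hasum : ∑ j, a j = ∑ i, (k i : ℝ) • z i := by
      rw [← hLsum]
      have h1 : ∑ j : Fin (m - n), a j = ∑ i : Fin L.length, L.get i :=
        Fintype.sum_equiv (finCongr hlen.symm) _ _ (fun j => rfl)
      rw [h1]
      simp [List.get_eq_getElem]
    refine ⟨t, htmem, a, hamem, ?_⟩
    show (m : ℝ) • s = t + ∑ j, a j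
    rw [hasum, ht, ← hzw, Finset.smul_sum, ← Finset.sum_add_distrib]
    refine Finset.sum_congr rfl fun i _ => ?_
    rw [smul_smul, ← add_smul]
    congr 1
    simp only [hc]
    ring
  · rintro ⟨t, ⟨s, hsS, rfl⟩, a, ha, rfl⟩
    have hsum : ∑ j, a j ∈ ((m - n : ℕ) : ℝ) • S :=
      sum_mem_nat_smul hSconv hSne _ a fun j => extremePoints_subset (ha j)
    obtain ⟨u, huS, hu⟩ := hsum
    have hsplit : (m : ℝ) • S = (n : ℝ) • S + ((m - n : ℕ) : ℝ) • S := by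
      rw [← hSconv.add_smul (by positivity) (by positivity)]
      congr 1
      push_cast [Nat.cast_sub hm.le]
      ring
    rw [hsplit]
    exact Set.add_mem_add ⟨s, hsS, rfl⟩ ⟨u, huS, hu⟩
end

section
/- Let S = ch{v₁, …, v_N} be the convex hull of a finite nonempty set of points in ℝⁿ, with n ≥ 1. Then for every integer m > 1, mS = S + (1/n)·Σ_{j=1}^{mn−n} ext S; that is, mS equals the set of all points t + (1/n)(a₁ + ⋯ + a_{mn−n}) where t ∈ S and each aⱼ is an extreme point of S. -/
open Pointwise

private lemma exists_nat_fn_le_sum {ι : Type*} [DecidableEq ι] (s : Finset ι) (f : ι → ℕ) (K : ℕ)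
    (h : K ≤ ∑ i ∈ s, f i) : ∃ g : ι → ℕ, (∀ i ∈ s, g i ≤ f i) ∧ ∑ i ∈ s, g i = K := by
  induction s using Finset.induction generalizing K with
  | empty => exact ⟨fun _ => 0, by simp, by simpa using (by simpa using h : K = 0).symm⟩
  | @insert a s ha ih =>
    rw [Finset.sum_insert ha] at h
    obtain ⟨g, hg, hgs⟩ := ih (K - min K (f a)) (by omega)
    refine ⟨Function.update g a (min K (f a)), ?_, ?_⟩
    · intro i hi
      rcases eq_or_ne i a with rfl | hia
      · simp [Function.update_self]
      · rw [Function.update_of_ne hia]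
        exact hg i (by simpa [hia] using hi)
    · rw [Finset.sum_insert ha, Function.update_self,
        Finset.sum_congr rfl (fun i hi => Function.update_of_ne (fun h' => ha (by rwa [← h'])) _ g), hgs]
      omega

theorem dilate_eq_set_add_scaled_sum_extreme_points
    {n : ℕ} (hn : 1 ≤ n) (V : Finset (EuclideanSpace ℝ (Fin n))) (hV : V.Nonempty)
    (S : Set (EuclideanSpace ℝ (Fin n)))
    (hS : S = convexHull ℝ (V : Set (EuclideanSpace ℝ (Fin n))))
    (m : ℕ) (hm : 1 < m) :
    (m : ℝ) • S = {x | ∃ t ∈ S, ∃ a : Fin (m * n - n) → EuclideanSpace ℝ (Fin n),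
      (∀ j, a j ∈ Set.extremePoints ℝ S) ∧ x = t + ((n : ℝ)⁻¹) • ∑ j, a j} := by
  classical
  set E : Set (EuclideanSpace ℝ (Fin n)) := Set.extremePoints ℝ S with hE
  have hSconv : Convex ℝ S := by rw [hS]; exact convex_convexHull ℝ _
  have hScomp : IsCompact S := by rw [hS]; exact V.finite_toSet.isCompact_convexHull (𝕜 := ℝ)
  have hE_sub_V : E ⊆ (V : Set (EuclideanSpace ℝ (Fin n))) := by
    rw [hE, hS]; exact extremePoints_convexHull_subset
  have hES : S = convexHull ℝ E := by
    have h2 : IsClosed (convexHull ℝ E) :=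
      ((V.finite_toSet.subset hE_sub_V).isCompact_convexHull (𝕜 := ℝ)).isClosed
    rw [← closure_convexHull_extremePoints hScomp hSconv, h2.closure_eq]
  have hn0 : (0:ℝ) < n := by exact_mod_cast hn
  set K : ℕ := m * n - n with hKdef
  have hKpos : 0 < K := by
    rw [hKdef]; have := Nat.mul_le_mul_right n hm; omega
  have hKcast : (K : ℝ) = ((m : ℝ) - 1) * n := by
    rw [hKdef]
    have : (m * n - n : ℕ) = m*n - n := rfl
    push_cast [Nat.cast_sub (Nat.le_mul_of_pos_left n (by omega) : n ≤ m * n)]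
    ring
  have hm1 : (1:ℝ) < m := by exact_mod_cast hm
  ext x
  constructor
  · -- hard direction
    rintro ⟨s, hs, rfl⟩
    beta_reduce
    have hs' : s ∈ convexHull ℝ E := by rw [← hES]; exact hs
    rw [convexHull_eq_union] at hs'
    simp only [Set.mem_iUnion] at hs'
    obtain ⟨F, hFE, hFai, hsF⟩ := hs'
    have hFne : F.Nonempty := by
      rcases Finset.eq_empty_or_nonempty F with rfl | h
      · simp at hsF
      · exact h
    have hFcard : F.card ≤ n + 1 := by
      have h1 := hFai.card_le_finrank_succ
      have h2 : Module.finrank ℝ (vectorSpan ℝ (Set.range ((↑) : F → EuclideanSpace ℝ (Fin n)))) ≤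
          Module.finrank ℝ (EuclideanSpace ℝ (Fin n)) := Submodule.finrank_le _
      have h3 : Module.finrank ℝ (EuclideanSpace ℝ (Fin n)) = n := finrank_euclideanSpace_fin
      simp only [Fintype.card_coe] at h1
      omega
    rw [Finset.convexHull_eq] at hsF
    obtain ⟨w, hw0, hw1, hws⟩ := hsF
    rw [Finset.centerMass_eq_of_sum_1 _ _ hw1] at hws
    simp only [id] at hws
    -- floors
    set d : EuclideanSpace ℝ (Fin n) → ℕ := fun e => (⌊(m : ℝ) * n * w e⌋).toNat with hd
    have hdcast : ∀ e ∈ F, (d e : ℝ) = ⌊(m : ℝ) * n * w e⌋ := by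
      intro e he
      rw [hd]
      have h0 : (0:ℝ) ≤ (m : ℝ) * n * w e :=
        mul_nonneg (by positivity) (hw0 e he)
      exact_mod_cast Int.toNat_of_nonneg (Int.floor_nonneg.2 h0)
    have hdsum : K ≤ ∑ e ∈ F, d e := by
      have hlt : ((m:ℝ) * n) - F.card < (∑ e ∈ F, d e : ℝ) := by
        have : ∑ e ∈ F, ((m:ℝ) * n * w e - 1) < ∑ e ∈ F, (d e : ℝ) := by
          refine Finset.sum_lt_sum_of_nonempty hFne fun e he => ?_
          rw [hdcast e he]
          exact Int.sub_one_lt_floor _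
        calc ((m:ℝ) * n) - F.card = ∑ e ∈ F, ((m:ℝ) * n * w e - 1) := by
              rw [Finset.sum_sub_distrib, ← Finset.mul_sum, hw1]; simp
          _ < _ := this
      have hlt2 : ((m:ℝ) * n) - (n + 1) < (∑ e ∈ F, d e : ℝ) := by
        refine lt_of_le_of_lt ?_ hlt
        have : (F.card : ℝ) ≤ n + 1 := by exact_mod_cast hFcard
        linarith
      have : (m * n : ℕ) - (n+1) < ∑ e ∈ F, d e := by
        have hmn : ((m*n : ℕ) : ℝ) = (m:ℝ)*n := by push_cast; ring
        rcases Nat.lt_or_ge (m*n) (n+1) with h | h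
        · omega
        · have : ((m*n - (n+1) : ℕ) : ℝ) < (∑ e ∈ F, d e : ℝ) := by
            rw [Nat.cast_sub h, hmn]; push_cast; linarith
          exact_mod_cast this
      omega
    obtain ⟨c, hc_le, hc_sum⟩ := exists_nat_fn_le_sum F d K hdsum
    have hcR : ∀ e ∈ F, (c e : ℝ) ≤ (m:ℝ) * n * w e := by
      intro e he
      calc (c e : ℝ) ≤ (d e : ℝ) := by exact_mod_cast hc_le e he
        _ = ⌊(m : ℝ) * n * w e⌋ := hdcast e he
        _ ≤ _ := Int.floor_le _
    -- build the list of extreme points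
    set L : List (EuclideanSpace ℝ (Fin n)) := F.toList.flatMap (fun e => List.replicate (c e) e) with hL
    have hlen : L.length = K := by
      rw [hL, List.length_flatMap]
      have : (F.toList.map (List.length ∘ fun e => List.replicate (c e) e)).sum
          = ∑ e ∈ F, c e := by
        simpa [Function.comp] using Finset.prod_to_list (M := Multiplicative ℕ) F c
      simpa [Function.comp, hc_sum] using this
    have hLsum : L.sum = ∑ e ∈ F, (c e : ℕ) • e := by
      rw [hL, List.flatMap, List.sum_flatten, List.map_map]
      simpa [Function.comp, List.sum_replicate] using
        Finset.prod_to_list (M := Multiplicative (EuclideanSpace ℝ (Fin n))) F (fun e => (c e : ℕ) • e)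
    have hLmem : ∀ y ∈ L, y ∈ F := by
      intro y hy
      rw [hL, List.mem_flatMap] at hy
      obtain ⟨e, he, hy⟩ := hy
      rw [List.eq_of_mem_replicate hy]
      exact Finset.mem_toList.mp he
    set a : Fin K → EuclideanSpace ℝ (Fin n) := fun j => L.get (Fin.cast hlen.symm j) with ha
    have ha_mem : ∀ j, a j ∈ E := fun j => hFE (hLmem _ (L.get_mem _))
    have ha_sum : ∑ j, a j = ∑ e ∈ F, (c e : ℕ) • e := by
      rw [← hLsum]
      have h1 : ∑ j, a j = ∑ i : Fin L.length, L.get i :=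
        Fintype.sum_equiv (finCongr hlen.symm) _ _ (fun j => rfl)
      rw [h1, ← List.sum_ofFn, List.ofFn_get]
    -- the remainder point t
    set t : EuclideanSpace ℝ (Fin n) := ∑ e ∈ F, ((m:ℝ) * w e - (c e : ℝ) / n) • e with ht
    have htS : t ∈ S := by
      rw [hES]
      refine Convex.sum_mem (convex_convexHull ℝ E) ?_ ?_ ?_
      · intro e he
        have := hcR e he
        have : (c e : ℝ) / n ≤ (m:ℝ) * w e := by
          rw [div_le_iff₀ hn0]; nlinarith
        linarith
      · rw [Finset.sum_sub_distrib, ← Finset.mul_sum, hw1, ← Finset.sum_div]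
        have : ∑ e ∈ F, (c e : ℝ) = (K : ℝ) := by exact_mod_cast hc_sum
        rw [this, hKcast]
        field_simp
        ring
      · intro e he
        exact subset_convexHull ℝ E (hFE he)
    refine ⟨t, htS, a, ha_mem, ?_⟩
    rw [ha_sum, ht]
    have hsmul : (n:ℝ)⁻¹ • ∑ e ∈ F, (c e : ℕ) • e = ∑ e ∈ F, ((c e : ℝ) / n) • e := by
      rw [Finset.smul_sum]
      refine Finset.sum_congr rfl fun e he => ?_
      rw [← Nat.cast_smul_eq_nsmul ℝ, smul_smul]
      congr 1
      field_simp
    rw [hsmul, ← Finset.sum_add_distrib]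
    have : ∑ e ∈ F, (((m:ℝ) * w e - (c e : ℝ) / n) • e + ((c e : ℝ) / n) • e)
        = ∑ e ∈ F, ((m:ℝ) * w e) • e := by
      refine Finset.sum_congr rfl fun e he => ?_
      rw [← add_smul]; ring_nf
    rw [this, ← hws, Finset.smul_sum]
    refine Finset.sum_congr rfl fun e he => ?_
    rw [smul_smul]
  · -- easy direction
    rintro ⟨t, htS, a, ha_mem, rfl⟩
    have haS : ∀ j, a j ∈ S := fun j => extremePoints_subset (ha_mem j)
    set s₀ : EuclideanSpace ℝ (Fin n) := (K : ℝ)⁻¹ • ∑ j, a j with hs₀def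
    have hKR : (0:ℝ) < K := by exact_mod_cast hKpos
    have hs₀ : s₀ ∈ S := by
      rw [hs₀def, Finset.smul_sum]
      refine Convex.sum_mem hSconv (fun j _ => by positivity) ?_ (fun j _ => haS j)
      simp [Finset.sum_const, Finset.card_univ]
      field_simp
    set s' : EuclideanSpace ℝ (Fin n) := (m:ℝ)⁻¹ • t + (1 - (m:ℝ)⁻¹) • s₀ with hs'def
    have hs' : s' ∈ S := by
      refine hSconv htS hs₀ (by positivity) ?_ (by ring)
      have : (m:ℝ)⁻¹ ≤ 1 := by
        rw [inv_le_one_iff₀]; right; linarith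
      linarith
    refine ⟨s', hs', ?_⟩
    beta_reduce
    rw [hs'def, smul_add, smul_smul, smul_smul, mul_inv_cancel₀ (by linarith : (m:ℝ) ≠ 0),
      one_smul, hs₀def, smul_smul]
    congr 1
    have : (m:ℝ) * (1 - (m:ℝ)⁻¹) * (K:ℝ)⁻¹ = (n:ℝ)⁻¹ := by
      rw [hKcast]
      have hm0 : (m:ℝ) ≠ 0 := by linarith
      have hm1' : (m:ℝ) - 1 ≠ 0 := by linarith
      have hn' : (n:ℝ) ≠ 0 := by linarith
      field_simp
    rw [this]
end

section
/- Let S = {x ∈ ℝ² : 0 ≤ x₁ ≤ 1, 0 ≤ x₂ ≤ 1, x₁² + x₂² ≤ 1} be the intersection of the closed unit disc centered at the origin with the square [0,1]². Then for every positive integer m, d(mS, ℕ² \ mS) = √(m² + 1) − m. -/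
open Pointwise

/-- The distance between two subsets of Euclidean space:
`d(A, B) = inf {dist s u : s ∈ A, u ∈ B}`. -/
noncomputable def setDist {n : ℕ} (A B : Set (EuclideanSpace ℝ (Fin n))) : ℝ :=
  sInf {r : ℝ | ∃ s ∈ A, ∃ u ∈ B, r = dist s u}

/-- The points of `ℝⁿ` with nonnegative integer coordinates. -/
def natLattice (n : ℕ) : Set (EuclideanSpace ℝ (Fin n)) :=
  {x | ∀ i, ∃ k : ℕ, x i = (k : ℝ)}

theorem dist_dilated_quarter_disc_to_lattice
    (S : Set (EuclideanSpace ℝ (Fin 2)))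
    (hS : S = {x : EuclideanSpace ℝ (Fin 2) |
      0 ≤ x 0 ∧ x 0 ≤ 1 ∧ 0 ≤ x 1 ∧ x 1 ≤ 1 ∧ (x 0) ^ 2 + (x 1) ^ 2 ≤ 1})
    (m : ℕ) (hm : 0 < m) :
    setDist ((m : ℝ) • S) (natLattice 2 \ (m : ℝ) • S)
      = Real.sqrt ((m : ℝ) ^ 2 + 1) - m := by
  have hm' : (0:ℝ) < m := by exact_mod_cast hm
  set c : ℝ := Real.sqrt ((m:ℝ)^2 + 1) with hc
  have hc2 : c ^ 2 = (m:ℝ)^2 + 1 := Real.sq_sqrt (by positivity)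
  have hc0 : 0 < c := Real.sqrt_pos.mpr (by positivity)
  have hmc : (m:ℝ) < c := by nlinarith
  -- lower bound: every element of the distance set is ≥ c - m
  have hlb : ∀ r ∈ {r : ℝ | ∃ s ∈ (m:ℝ) • S, ∃ u ∈ natLattice 2 \ (m:ℝ) • S,
      r = dist s u}, c - (m:ℝ) ≤ r := by
    rintro r ⟨s, hs, u, ⟨hu1, hu2⟩, rfl⟩
    obtain ⟨x, hx, rfl⟩ := hs
    rw [hS] at hx
    obtain ⟨hx0, hx1, hx2, hx3, hx4⟩ := hx
    have hns : ‖(m:ℝ) • x‖ ≤ (m:ℝ) := by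
      rw [norm_smul]
      have hnx : ‖x‖ ≤ 1 := by
        rw [EuclideanSpace.norm_eq]
        rw [show (1:ℝ) = Real.sqrt 1 by simp]
        apply Real.sqrt_le_sqrt
        simp only [Fin.sum_univ_two, Real.norm_eq_abs, sq_abs]
        linarith
      have hnm : ‖(m:ℝ)‖ = (m:ℝ) := by simp
      nlinarith [norm_nonneg x]
    obtain ⟨k₀, hk₀⟩ := hu1 0
    obtain ⟨k₁, hk₁⟩ := hu1 1
    have hkey : (m:ℝ)^2 + 1 ≤ (u 0)^2 + (u 1)^2 := by
      have hnat : m^2 + 1 ≤ k₀^2 + k₁^2 := by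
        by_contra h
        push_neg at h
        have hsum : k₀^2 + k₁^2 ≤ m^2 := by omega
        have h0 : k₀ ≤ m := by nlinarith
        have h1 : k₁ ≤ m := by nlinarith
        apply hu2
        refine ⟨(m:ℝ)⁻¹ • u, ?_, ?_⟩
        · rw [hS]
          have e0 : ((m:ℝ)⁻¹ • u) 0 = (m:ℝ)⁻¹ * (k₀:ℝ) := by
            show (m:ℝ)⁻¹ * u 0 = _; rw [hk₀]
          have e1 : ((m:ℝ)⁻¹ • u) 1 = (m:ℝ)⁻¹ * (k₁:ℝ) := by
            show (m:ℝ)⁻¹ * u 1 = _; rw [hk₁]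
          have hk0m : (k₀:ℝ) ≤ (m:ℝ) := by exact_mod_cast h0
          have hk1m : (k₁:ℝ) ≤ (m:ℝ) := by exact_mod_cast h1
          have hsum' : (k₀:ℝ)^2 + (k₁:ℝ)^2 ≤ (m:ℝ)^2 := by exact_mod_cast hsum
          refine ⟨?_, ?_, ?_, ?_, ?_⟩
          · rw [e0]; positivity
          · rw [e0, inv_mul_le_iff₀ hm', mul_one]; exact hk0m
          · rw [e1]; positivity
          · rw [e1, inv_mul_le_iff₀ hm', mul_one]; exact hk1m
          · rw [e0, e1, mul_pow, mul_pow, ← mul_add, inv_pow,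
              inv_mul_le_iff₀ (by positivity), mul_one]
            exact hsum'
        · show (m:ℝ) • ((m:ℝ)⁻¹ • u) = u
          rw [smul_smul, mul_inv_cancel₀ (ne_of_gt hm'), one_smul]
      have hcast : ((m:ℕ):ℝ)^2 + 1 ≤ ((k₀:ℕ):ℝ)^2 + ((k₁:ℕ):ℝ)^2 := by
        exact_mod_cast hnat
      rw [hk₀, hk₁]
      linarith
    have hnu : c ≤ ‖u‖ := by
      rw [EuclideanSpace.norm_eq]
      apply Real.sqrt_le_sqrt
      simpa [Fin.sum_univ_two, Real.norm_eq_abs, sq_abs] using hkey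
    calc c - (m:ℝ) ≤ ‖u‖ - ‖(m:ℝ) • x‖ := by linarith
      _ ≤ ‖u - (m:ℝ) • x‖ := norm_sub_norm_le _ _
      _ = dist ((m:ℝ) • x) u := by
          rw [dist_eq_norm, ← norm_neg (u - (m:ℝ) • x), neg_sub]
  -- witness pair achieving c - m
  have hwit : (c - (m:ℝ)) ∈ {r : ℝ | ∃ s ∈ (m:ℝ) • S, ∃ u ∈ natLattice 2 \ (m:ℝ) • S,
      r = dist s u} := by
    set u₀ : EuclideanSpace ℝ (Fin 2) := !₂[(m:ℝ), 1] with hu₀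
    have hu00 : u₀ 0 = (m:ℝ) := rfl
    have hu01 : u₀ 1 = (1:ℝ) := rfl
    set x₀ : EuclideanSpace ℝ (Fin 2) := c⁻¹ • u₀ with hx₀
    have hx00 : x₀ 0 = c⁻¹ * (m:ℝ) := rfl
    have hx01 : x₀ 1 = c⁻¹ * 1 := rfl
    have hx₀S : x₀ ∈ S := by
      rw [hS]
      refine ⟨?_, ?_, ?_, ?_, ?_⟩
      · rw [hx00]; positivity
      · rw [hx00, inv_mul_le_iff₀ hc0, mul_one]; linarith
      · rw [hx01]; positivity
      · rw [hx01, inv_mul_le_iff₀ hc0, mul_one]; nlinarith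
      · rw [hx00, hx01, mul_pow, mul_pow, ← mul_add, inv_pow,
          inv_mul_le_iff₀ (by positivity), mul_one]
        nlinarith
    have hnu₀ : ‖u₀‖ = c := by
      rw [EuclideanSpace.norm_eq]
      simp only [Fin.sum_univ_two]
      rw [hu00, hu01]
      simp [Real.norm_eq_abs, sq_abs, hc]
    refine ⟨(m:ℝ) • x₀, ⟨x₀, hx₀S, rfl⟩, u₀, ⟨?_, ?_⟩, ?_⟩
    · intro i
      fin_cases i
      · exact ⟨m, hu00⟩
      · exact ⟨1, by push_cast; exact hu01⟩
    · rintro ⟨y, hy, hyu⟩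
      have hyu' : (m:ℝ) • y = u₀ := hyu
      rw [hS] at hy
      have h0 : (m:ℝ) * y 0 = (m:ℝ) := by
        have : ((m:ℝ) • y) 0 = u₀ 0 := by rw [hyu']
        rw [hu00] at this; exact this
      have h1 : (m:ℝ) * y 1 = 1 := by
        have : ((m:ℝ) • y) 1 = u₀ 1 := by rw [hyu']
        rw [hu01] at this; exact this
      nlinarith [hy.2.2.2.2, hy.1, hy.2.2.1]
    · rw [dist_eq_norm]
      have hdiff : (m:ℝ) • x₀ - u₀ = ((m:ℝ) * c⁻¹ - 1) • u₀ := by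
        rw [hx₀, smul_smul, sub_smul, one_smul]
      rw [hdiff, norm_smul, hnu₀, Real.norm_eq_abs]
      have hle : (m:ℝ) * c⁻¹ - 1 ≤ 0 := by
        rw [sub_nonpos, mul_inv_le_iff₀ hc0, one_mul]; linarith
      rw [abs_of_nonpos hle]
      field_simp
      ring
  apply le_antisymm
  · exact csInf_le ⟨c - m, hlb⟩ hwit
  · exact le_csInf ⟨c - m, hwit⟩ hlb
end

section
/- Let f : [0,1] → ℝ be continuous, concave, and strictly decreasing, with f(0) = 1 and f(1) = 0, and let S = {s ∈ ℝ² : 0 ≤ s₁ ≤ 1, 0 ≤ s₂ ≤ f(s₁)} be the intersection of the hypograph of f with [0,1]². Then for every positive integer m, d(mS, ℕ² \ mS) ≤ m·(1 − f(1/m)). -/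
open Pointwise

theorem hypograph_dist_to_lattice_upper_bound
    (f : ℝ → ℝ)
    (hcont : ContinuousOn f (Set.Icc 0 1))
    (hconc : ConcaveOn ℝ (Set.Icc 0 1) f)
    (hanti : StrictAntiOn f (Set.Icc 0 1))
    (hf0 : f 0 = 1) (hf1 : f 1 = 0)
    (S : Set (EuclideanSpace ℝ (Fin 2)))
    (hS : S = {s : EuclideanSpace ℝ (Fin 2) |
      0 ≤ s 0 ∧ s 0 ≤ 1 ∧ 0 ≤ s 1 ∧ s 1 ≤ f (s 0)})
    (m : ℕ) (hm : 0 < m) :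
    setDist ((m : ℝ) • S) (natLattice 2 \ (m : ℝ) • S)
      ≤ m * (1 - f (1 / m)) := by
  have hm' : (0:ℝ) < m := by exact_mod_cast hm
  have h1m0 : (0:ℝ) < 1/m := by positivity
  have h1m1 : (1:ℝ)/m ≤ 1 := by
    rw [div_le_one hm']; exact_mod_cast hm
  have hmem : (1:ℝ)/m ∈ Set.Icc (0:ℝ) 1 := ⟨le_of_lt h1m0, h1m1⟩
  have hone : (1:ℝ) ∈ Set.Icc (0:ℝ) 1 := ⟨zero_le_one, le_refl 1⟩
  have hzero : (0:ℝ) ∈ Set.Icc (0:ℝ) 1 := ⟨le_refl 0, zero_le_one⟩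
  have hfnn : 0 ≤ f (1/m) := by
    have := hanti.antitoneOn hmem hone h1m1
    rw [hf1] at this; exact this
  have hflt : f (1/m) < 1 := by
    have := hanti hzero hmem h1m0
    rw [hf0] at this; exact this
  set s' : EuclideanSpace ℝ (Fin 2) := WithLp.toLp 2 ![1/m, f (1/m)] with hs'
  have hs'S : s' ∈ S := by
    rw [hS]
    have e0 : s' 0 = 1/(m:ℝ) := rfl
    have e1 : s' 1 = f (1/(m:ℝ)) := rfl
    exact ⟨by rw [e0]; exact le_of_lt h1m0, by rw [e0]; exact h1m1,
      by rw [e1]; exact hfnn, by rw [e0, e1]⟩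
  set u : EuclideanSpace ℝ (Fin 2) := WithLp.toLp 2 ![1, (m:ℝ)] with hu
  have huL : u ∈ natLattice 2 := by
    intro i
    fin_cases i
    · exact ⟨1, by simp [hu]⟩
    · exact ⟨m, by simp [hu]⟩
  have huN : u ∉ (m:ℝ) • S := by
    rintro ⟨w, hw, hwu⟩
    rw [hS] at hw
    obtain ⟨hw0, hw1, hw2, hw3⟩ := hw
    have e0 : (m:ℝ) * w 0 = 1 := by
      have := congrArg (fun x => x 0) hwu
      simpa [hu] using this
    have e1 : (m:ℝ) * w 1 = m := by
      have := congrArg (fun x => x 1) hwu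
      simpa [hu] using this
    have hw0' : w 0 = 1/m := by field_simp at e0 ⊢; linarith
    have hw1' : w 1 = 1 := by
      have hne : (m:ℝ) ≠ 0 := ne_of_gt hm'
      field_simp at e1
      tauto
    rw [hw0', hw1'] at hw3
    linarith
  have hsmem : (m:ℝ) • s' ∈ (m:ℝ) • S := Set.smul_mem_smul_set hs'S
  have h0 : ((m:ℝ) • s') 0 = 1 := by
    simp [hs']
    field_simp
  have h1 : ((m:ℝ) • s') 1 = m * f (1/m) := by simp [hs']
  have hu0 : u 0 = 1 := by simp [hu]
  have hu1 : u 1 = (m:ℝ) := by simp [hu]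
  have hdist : dist ((m:ℝ) • s') u = m * (1 - f (1/m)) := by
    rw [EuclideanSpace.dist_eq, Fin.sum_univ_two, h0, h1, hu0, hu1, dist_self]
    have h2 : dist ((m:ℝ) * f (1/m)) (m:ℝ) = m * (1 - f (1/m)) := by
      rw [Real.dist_eq, abs_of_nonpos (by nlinarith)]
      ring
    have h3 : (0:ℝ)^2 = 0 := by norm_num
    rw [h2, h3, zero_add]
    exact Real.sqrt_sq (by nlinarith)
  have hbdd : BddBelow {r : ℝ | ∃ s ∈ (m:ℝ) • S, ∃ v ∈ natLattice 2 \ (m:ℝ) • S, r = dist s v} := by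
    refine ⟨0, ?_⟩
    rintro r ⟨s, _, v, _, rfl⟩
    exact dist_nonneg
  have hmemset : m * (1 - f (1/m)) ∈
      {r : ℝ | ∃ s ∈ (m:ℝ) • S, ∃ v ∈ natLattice 2 \ (m:ℝ) • S, r = dist s v} :=
    ⟨(m:ℝ) • s', hsmem, u, ⟨huL, huN⟩, hdist.symm⟩
  exact csInf_le hbdd hmemset
end

section
/- Let b > 0 and c > 1 + 1/b be real constants and define f : [0,1] → ℝ by f(0) = 1 and f(t) = 1 − exp(−c·t^{−b} + c) for t ∈ (0,1]. Then f is strictly decreasing on [0,1] and strictly concave on [0,1]; moreover, for every t ∈ (0,1), f′(t) = b·c·t^{−b−1}·(f(t) − 1) < 0 and f″(t) = b·c·t^{−2b−2}·(b·c − (b+1)·t^{b})·(f(t) − 1) < 0. -/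
open Filter Set Real

theorem flat_concave_profile_properties
    (b c : ℝ) (hb : 0 < b) (hc : 1 + 1 / b < c)
    (f : ℝ → ℝ) (hf0 : f 0 = 1)
    (hf : ∀ t ∈ Set.Ioc (0 : ℝ) 1, f t = 1 - Real.exp (-c * t ^ (-b) + c)) :
    StrictAntiOn f (Set.Icc 0 1) ∧ StrictConcaveOn ℝ (Set.Icc (0 : ℝ) 1) f ∧
    ∀ t ∈ Set.Ioo (0 : ℝ) 1,
      deriv f t = b * c * t ^ (-b - 1) * (f t - 1) ∧
      deriv f t < 0 ∧
      deriv (deriv f) t = b * c * t ^ (-(2 * b) - 2) * (b * c - (b + 1) * t ^ b) * (f t - 1) ∧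
      deriv (deriv f) t < 0 := by
  have hb0 : b ≠ 0 := hb.ne'
  have hbc : b + 1 < b * c := by
    have := (mul_lt_mul_iff_right₀ hb).2 hc
    rwa [mul_add, mul_one, mul_one_div, div_self hb0] at this
  have hcpos : 0 < c := by
    have h1b : 0 < 1 / b := by positivity
    linarith
  set u : ℝ → ℝ := fun t => -c * t ^ (-b) + c with hu
  set g : ℝ → ℝ := fun t => 1 - Real.exp (u t) with hg
  set g1 : ℝ → ℝ := fun t => b * c * t ^ (-b - 1) * (g t - 1) with hg1
  set g2 : ℝ → ℝ :=
    fun t => b * c * t ^ (-(2 * b) - 2) * (b * c - (b + 1) * t ^ b) * (g t - 1) with hg2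
  have hgf : ∀ t ∈ Set.Ioc (0 : ℝ) 1, f t = g t := hf
  have hgm1 : ∀ t : ℝ, g t - 1 = -Real.exp (u t) := by
    intro t; simp [hg]
  have hgm1neg : ∀ t : ℝ, g t - 1 < 0 := by
    intro t; rw [hgm1]; have := Real.exp_pos (u t); linarith
  -- derivative of u
  have hu' : ∀ t : ℝ, 0 < t → HasDerivAt u (b * c * t ^ (-b - 1)) t := by
    intro t ht
    have h1 : HasDerivAt (fun s : ℝ => s ^ (-b)) (-b * t ^ (-b - 1)) t :=
      Real.hasDerivAt_rpow_const (Or.inl ht.ne')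
    have := (h1.const_mul (-c)).add_const c
    refine this.congr_deriv ?_
    ring
  -- first derivative of g
  have hgd : ∀ t : ℝ, 0 < t → HasDerivAt g (g1 t) t := by
    intro t ht
    have := ((Real.hasDerivAt_exp (u t)).comp t (hu' t ht)).const_sub 1
    refine this.congr_deriv ?_
    simp only [hg1]
    rw [hgm1 t]
    ring
  -- second derivative
  have hgd2 : ∀ t : ℝ, 0 < t → HasDerivAt g1 (g2 t) t := by
    intro t ht
    have h1 : HasDerivAt (fun s : ℝ => b * c * s ^ (-b - 1))
        (b * c * ((-b - 1) * t ^ (-b - 1 - 1))) t :=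
      (Real.hasDerivAt_rpow_const (Or.inl ht.ne')).const_mul (b * c)
    have h2 : HasDerivAt (fun s : ℝ => g s - 1) (g1 t) t := (hgd t ht).sub_const 1
    have h3 := h1.mul h2
    refine h3.congr_deriv ?_
    have e1 : t ^ (-b - 1) * t ^ (-b - 1) = t ^ (-(2 * b) - 2) := by
      rw [← Real.rpow_add ht]; ring_nf
    have e2 : t ^ (-(2 * b) - 2) * t ^ b = t ^ (-b - 1 - 1) := by
      rw [← Real.rpow_add ht]; ring_nf
    simp only [hg2, hg1]
    rw [← e2, ← e1]
    ring
  have hg1neg : ∀ t : ℝ, 0 < t → g1 t < 0 := by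
    intro t ht
    have h1 : 0 < t ^ (-b - 1) := Real.rpow_pos_of_pos ht _
    have h2 := hgm1neg t
    simp only [hg1]
    have : 0 < b * c * t ^ (-b - 1) := by positivity
    nlinarith
  have hg2neg : ∀ t : ℝ, 0 < t → t < 1 → g2 t < 0 := by
    intro t ht ht1
    have h1 : 0 < t ^ (-(2 * b) - 2) := Real.rpow_pos_of_pos ht _
    have h2 := hgm1neg t
    have h3 : t ^ b < 1 := Real.rpow_lt_one ht.le ht1 hb
    have h4 : 0 < t ^ b := Real.rpow_pos_of_pos ht _
    have h5 : 0 < b * c - (b + 1) * t ^ b := by nlinarith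
    simp only [hg2]
    have : 0 < b * c * t ^ (-(2 * b) - 2) * (b * c - (b + 1) * t ^ b) := by positivity
    nlinarith
  -- f equals g near interior points
  have hev : ∀ t ∈ Set.Ioo (0 : ℝ) 1, f =ᶠ[nhds t] g := by
    intro t ht
    filter_upwards [isOpen_Ioo.mem_nhds ht] with x hx
    exact hgf x ⟨hx.1, hx.2.le⟩
  have hderiv_g : ∀ t : ℝ, 0 < t → deriv g t = g1 t := fun t ht => (hgd t ht).deriv
  have hderiv_f : ∀ t ∈ Set.Ioo (0 : ℝ) 1, deriv f t = g1 t := by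
    intro t ht
    rw [(hev t ht).deriv_eq, hderiv_g t ht.1]
  have hderiv2_f : ∀ t ∈ Set.Ioo (0 : ℝ) 1, deriv (deriv f) t = g2 t := by
    intro t ht
    have h1 : deriv f =ᶠ[nhds t] deriv g := (hev t ht).deriv
    rw [h1.deriv_eq]
    have h2 : deriv g =ᶠ[nhds t] g1 := by
      filter_upwards [isOpen_Ioi.mem_nhds ht.1] with x hx
      exact hderiv_g x hx
    rw [h2.deriv_eq, (hgd2 t ht.1).deriv]
  -- continuity of f on [0,1]
  have hcont : ContinuousOn f (Set.Icc 0 1) := by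
    intro x hx
    rcases eq_or_lt_of_le hx.1 with h0 | h0
    · -- x = 0
      subst h0
      rw [← continuousWithinAt_diff_self, Set.Icc_diff_left]
      have htend : Tendsto g (nhdsWithin 0 (Set.Ioc (0 : ℝ) 1)) (nhds 1) := by
        have hb1 : Tendsto (fun t : ℝ => t ^ b) (nhdsWithin 0 (Set.Ioc (0 : ℝ) 1))
            (nhdsWithin 0 (Set.Ioi (0 : ℝ))) := by
          apply tendsto_nhdsWithin_of_tendsto_nhds_of_eventually_within
          · have h := (Real.continuousAt_rpow_const 0 b (Or.inr hb.le)).tendsto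
            rw [Real.zero_rpow hb0] at h
            exact h.mono_left nhdsWithin_le_nhds
          · exact eventually_mem_nhdsWithin.mono fun t ht => Real.rpow_pos_of_pos ht.1 b
        have hb2 : Tendsto (fun t : ℝ => t ^ (-b)) (nhdsWithin 0 (Set.Ioc (0 : ℝ) 1)) atTop := by
          refine (hb1.inv_tendsto_nhdsGT_zero).congr' ?_
          filter_upwards [eventually_mem_nhdsWithin] with t ht
          simp [Real.rpow_neg ht.1.le]
        have hb3 : Tendsto u (nhdsWithin 0 (Set.Ioc (0 : ℝ) 1)) atBot := by
          have h4 : Tendsto (fun t : ℝ => c * t ^ (-b) + -c)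
              (nhdsWithin 0 (Set.Ioc (0 : ℝ) 1)) atTop :=
            Filter.tendsto_atTop_add_const_right _ (-c) (hb2.const_mul_atTop hcpos)
          have h5 := tendsto_neg_atTop_atBot.comp h4
          refine h5.congr fun t => ?_
          simp [hu]; ring
        have hb4 : Tendsto (fun t => Real.exp (u t)) (nhdsWithin 0 (Set.Ioc (0 : ℝ) 1))
            (nhds 0) := Real.tendsto_exp_atBot.comp hb3
        have := (tendsto_const_nhds (x := (1 : ℝ))
          (f := nhdsWithin 0 (Set.Ioc (0 : ℝ) 1))).sub hb4
        simpa using this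
      have : Tendsto f (nhdsWithin 0 (Set.Ioc (0 : ℝ) 1)) (nhds 1) := by
        refine htend.congr' ?_
        filter_upwards [eventually_mem_nhdsWithin] with t ht
        exact (hgf t ht).symm
      rw [ContinuousWithinAt, hf0]
      exact this
    · -- 0 < x
      have hgx : f x = g x := hgf x ⟨h0, hx.2⟩
      have hcg : ContinuousWithinAt g (Set.Icc (0 : ℝ) 1) x :=
        (hgd x h0).continuousAt.continuousWithinAt
      refine hcg.congr_of_eventuallyEq ?_ hgx
      filter_upwards [nhdsWithin_le_nhds (isOpen_Ioi.mem_nhds h0),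
        eventually_mem_nhdsWithin] with t ht1 ht2
      exact hgf t ⟨ht1, ht2.2⟩
  refine ⟨?_, ?_, ?_⟩
  · -- strictly decreasing
    intro x hx y hy hxy
    rcases eq_or_lt_of_le hx.1 with h0 | h0
    · subst h0
      rw [hf0, hgf y ⟨hxy, hy.2⟩]
      have := Real.exp_pos (u y)
      simp only [hg]
      linarith
    · rw [hgf x ⟨h0, hx.2⟩, hgf y ⟨h0.trans hxy, hy.2⟩]
      simp only [hg]
      have hlt : y ^ (-b) < x ^ (-b) :=
        Real.rpow_lt_rpow_of_neg h0 hxy (neg_neg_of_pos hb)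
      have : u x < u y := by
        simp only [hu]
        nlinarith
      have := Real.exp_lt_exp.2 this
      linarith
  · -- strictly concave
    apply strictConcaveOn_of_deriv2_neg (convex_Icc 0 1) hcont
    intro x hx
    rw [interior_Icc] at hx
    have : deriv^[2] f x = deriv (deriv f) x := by
      simp [Function.iterate_succ, Function.iterate_zero]
    rw [this, hderiv2_f x hx]
    exact hg2neg x hx.1 hx.2
  · intro t ht
    have hft : f t = g t := hgf t ⟨ht.1, ht.2.le⟩
    refine ⟨?_, ?_, ?_, ?_⟩
    · rw [hderiv_f t ht, hft]
    · rw [hderiv_f t ht]; exact hg1neg t ht.1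
    · rw [hderiv2_f t ht, hft]
    · rw [hderiv2_f t ht]; exact hg2neg t ht.1 ht.2
end

section
/- Let b > 1 and c > 1 + 1/b be real constants, define f : [0,1] → ℝ by f(0) = 1 and f(t) = 1 − exp(−c·t^{−b} + c) for t ∈ (0,1], and let S = {s ∈ ℝ² : 0 ≤ s₁ ≤ 1, 0 ≤ s₂ ≤ f(s₁)} be the intersection of the hypograph of f with [0,1]². Then liminf_{m→∞} (d(mS, ℕ² \ mS))^{1/m} = 0. -/
open Pointwise Filter

theorem hypograph_liminf_root_dist_eq_zero
    (b c : ℝ) (hb : 1 < b) (hc : 1 + 1 / b < c)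
    (f : ℝ → ℝ) (hf0 : f 0 = 1)
    (hf : ∀ t ∈ Set.Ioc (0 : ℝ) 1, f t = 1 - Real.exp (-c * t ^ (-b) + c))
    (S : Set (EuclideanSpace ℝ (Fin 2)))
    (hS : S = {s : EuclideanSpace ℝ (Fin 2) |
      0 ≤ s 0 ∧ s 0 ≤ 1 ∧ 0 ≤ s 1 ∧ s 1 ≤ f (s 0)}) :
    Filter.liminf (fun m : ℕ =>
      (setDist ((m : ℝ) • S) (natLattice 2 \ (m : ℝ) • S)) ^ ((1 : ℝ) / (m : ℝ)))
      Filter.atTop = 0 := by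
  have hb0 : (0 : ℝ) < b := by linarith
  have hc0 : (0 : ℝ) < c := by
    have : (0:ℝ) < 1 / b := by positivity
    linarith
  set g : ℕ → ℝ := fun m =>
    setDist ((m : ℝ) • S) (natLattice 2 \ (m : ℝ) • S) with hg
  -- nonnegativity of the set distance
  have hg0 : ∀ m : ℕ, 0 ≤ g m := by
    intro m
    apply Real.sInf_nonneg
    rintro r ⟨s, _, u, _, rfl⟩
    exact dist_nonneg
  -- upper bound on the set distance for m ≥ 1
  have hgle : ∀ m : ℕ, 1 ≤ m →
      g m ≤ (m : ℝ) * Real.exp (-c * (m : ℝ) ^ b + c) := by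
    intro m hm
    set M : ℝ := (m : ℝ) with hM
    have hM1 : (1 : ℝ) ≤ M := by rw [hM]; exact_mod_cast hm
    have hM0 : (0 : ℝ) < M := by linarith
    have htmem : (1 / M) ∈ Set.Ioc (0 : ℝ) 1 := by
      constructor
      · positivity
      · rw [div_le_one hM0]; exact hM1
    set E : ℝ := Real.exp (-c * M ^ b + c) with hE
    have hE0 : 0 < E := Real.exp_pos _
    have hfval : f (1 / M) = 1 - E := by
      rw [hf _ htmem, hE, one_div, Real.inv_rpow hM0.le, Real.rpow_neg hM0.le, inv_inv]
    have hMb1 : (1 : ℝ) ≤ M ^ b := Real.one_le_rpow hM1 hb0.le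
    have hE1 : E ≤ 1 := by
      rw [hE, Real.exp_le_one_iff]
      nlinarith
    -- the point of `m • S`
    set s : EuclideanSpace ℝ (Fin 2) := !₂[1 / M, f (1 / M)] with hs
    have hsS : s ∈ S := by
      rw [hS]
      refine ⟨?_, ?_, ?_, le_refl _⟩
      · show (0:ℝ) ≤ 1 / M; positivity
      · show (1:ℝ) / M ≤ 1; exact htmem.2
      · show (0:ℝ) ≤ f (1 / M); rw [hfval]; linarith
    -- the lattice point not in `m • S`
    set u : EuclideanSpace ℝ (Fin 2) := !₂[1, M] with hu
    have huL : u ∈ natLattice 2 := by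
      intro i
      fin_cases i
      · exact ⟨1, by simp [hu]⟩
      · exact ⟨m, by simp [hu, hM]⟩
    have huS : u ∉ (M : ℝ) • S := by
      rintro ⟨s', hs', hsu⟩
      rw [hS] at hs'
      obtain ⟨_, _, _, h4⟩ := hs'
      have h0 : M * s' 0 = 1 := by
        have := congrArg (· 0) hsu
        simpa [hu] using this
      have h1 : M * s' 1 = M := by
        have := congrArg (· 1) hsu
        simpa [hu] using this
      have hs'1 : s' 1 = 1 := by
        have : M * s' 1 = M * 1 := by rw [h1, mul_one]
        exact mul_left_cancel₀ hM0.ne' this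
      have hs'0 : s' 0 = 1 / M := by field_simp; linarith [h0]
      rw [hs'1, hs'0, hfval] at h4
      linarith
    -- the distance bound
    have hPmem : (M : ℝ) • s ∈ (M : ℝ) • S := Set.smul_mem_smul_set hsS
    have hdist : dist ((M : ℝ) • s) u = M * E := by
      rw [EuclideanSpace.dist_eq]
      have e0 : ((M : ℝ) • s) 0 = M * (1 / M) := by simp [hs]
      have e1 : ((M : ℝ) • s) 1 = M * f (1 / M) := by simp [hs]
      have eu0 : u 0 = 1 := by simp [hu]
      have eu1 : u 1 = M := by simp [hu]
      rw [Fin.sum_univ_two, e0, e1, eu0, eu1]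
      simp only [Real.dist_eq]
      rw [mul_one_div, div_self hM0.ne', hfval]
      have : |(1:ℝ) - 1| ^ 2 + |M * (1 - E) - M| ^ 2 = (M * E) ^ 2 := by
        rw [sq_abs, sq_abs]; ring
      rw [this, Real.sqrt_sq (by positivity)]
    have : g m ≤ dist ((M : ℝ) • s) u := by
      apply csInf_le
      · exact ⟨0, by rintro r ⟨s'', _, u'', _, rfl⟩; exact dist_nonneg⟩
      · exact ⟨(M : ℝ) • s, hPmem, u, ⟨huL, huS⟩, rfl⟩
    rw [hdist] at this
    exact this
  -- the upper bound sequence, after taking m-th roots, tends to 0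
  have hDto : Tendsto
      (fun m : ℕ => ((m : ℝ) * Real.exp (-c * (m : ℝ) ^ b + c)) ^ ((1:ℝ) / (m : ℝ)))
      atTop (nhds 0) := by
    have key : Tendsto
        (fun m : ℕ => (m : ℝ) ^ ((1:ℝ) / (m : ℝ)) *
          (Real.exp (c / (m : ℝ)) * Real.exp (-(c * (m : ℝ) ^ (b - 1)))))
        atTop (nhds 0) := by
      have t1 : Tendsto (fun m : ℕ => (m : ℝ) ^ ((1:ℝ) / (m : ℝ))) atTop (nhds 1) :=
        tendsto_rpow_div.comp tendsto_natCast_atTop_atTop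
      have t2 : Tendsto (fun m : ℕ => Real.exp (c / (m : ℝ))) atTop (nhds 1) := by
        have := (Real.continuous_exp.tendsto 0).comp
          (tendsto_const_div_atTop_nhds_zero_nat c)
        simpa [Function.comp_def] using this
      have t3 : Tendsto (fun m : ℕ => Real.exp (-(c * (m : ℝ) ^ (b - 1)))) atTop
          (nhds 0) := by
        apply Real.tendsto_exp_atBot.comp
        apply tendsto_neg_atTop_atBot.comp
        exact ((tendsto_rpow_atTop (by linarith : (0:ℝ) < b - 1)).const_mul_atTop
          hc0).comp tendsto_natCast_atTop_atTop
      have := t1.mul (t2.mul t3)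
      simpa using this
    apply key.congr'
    filter_upwards [eventually_ge_atTop 1] with m hm
    set M : ℝ := (m : ℝ) with hM
    have hM1 : (1 : ℝ) ≤ M := by rw [hM]; exact_mod_cast hm
    have hM0 : (0 : ℝ) < M := by linarith
    rw [Real.mul_rpow hM0.le (Real.exp_pos _).le, ← Real.exp_mul,
      Real.rpow_sub hM0, Real.rpow_one, ← Real.exp_add]
    congr 2
    field_simp
    ring
  -- squeeze
  have hto : Tendsto (fun m : ℕ => g m ^ ((1:ℝ) / (m : ℝ))) atTop (nhds 0) := by
    apply tendsto_of_tendsto_of_tendsto_of_le_of_le' tendsto_const_nhds hDto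
    · filter_upwards with m
      exact Real.rpow_nonneg (hg0 m) _
    · filter_upwards [eventually_ge_atTop 1] with m hm
      exact Real.rpow_le_rpow (hg0 m) (hgle m hm) (by positivity)
  exact hto.liminf_eq
end
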